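/- arXiv:2505.19981 — 5 statements merged into one kernel-verified Lean document; each statement's English description precedes it below -/
import Mathlib

section
/- If φ : [0,1] → [0,∞) is a quasiconcave function (i.e., φ is nondecreasing, t ↦ φ(t)/t is nonincreasing on (0,1], and φ(t) = 0 iff t = 0), and φ̃ denotes the least nondecreasing concave majorant of φ on [0,1], then φ(t) ≤ φ̃(t) ≤ 2φ(t) for every t ∈ [0,1]. -/
/-- If φ is quasiconcave on [0,1] and φ̃ is the least nondecreasing
concave majorant of φ on [0,1], then φ ≤ φ̃ ≤ 2φ on [0,1]. -/
theorem stmt0 (φ φt : ℝ → ℝ)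
    (hnonneg : ∀ t ∈ Set.Icc (0:ℝ) 1, 0 ≤ φ t)
    (hmono : MonotoneOn φ (Set.Icc (0:ℝ) 1))
    (hqc : ∀ s t : ℝ, 0 < s → s ≤ t → t ≤ 1 → φ t / t ≤ φ s / s)
    (hzero : ∀ t ∈ Set.Icc (0:ℝ) 1, (φ t = 0 ↔ t = 0))
    (hφt : ∀ t ∈ Set.Icc (0:ℝ) 1,
      φt t = sInf {y : ℝ | ∃ g : ℝ → ℝ, MonotoneOn g (Set.Icc (0:ℝ) 1) ∧
        ConcaveOn ℝ (Set.Icc (0:ℝ) 1) g ∧ (∀ s ∈ Set.Icc (0:ℝ) 1, φ s ≤ g s) ∧ y = g t}) :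
    ∀ t ∈ Set.Icc (0:ℝ) 1, φ t ≤ φt t ∧ φt t ≤ 2 * φ t := by
  intro t ht
  obtain ⟨ht0, ht1⟩ := ht
  have h01 : (0:ℝ) ∈ Set.Icc (0:ℝ) 1 := ⟨le_refl 0, zero_le_one⟩
  have h11 : (1:ℝ) ∈ Set.Icc (0:ℝ) 1 := ⟨zero_le_one, le_refl 1⟩
  have hφ0 : φ 0 = 0 := (hzero 0 h01).mpr rfl
  have hφ1 : 0 ≤ φ 1 := hnonneg 1 h11
  set S := {y : ℝ | ∃ g : ℝ → ℝ, MonotoneOn g (Set.Icc (0:ℝ) 1) ∧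
        ConcaveOn ℝ (Set.Icc (0:ℝ) 1) g ∧ (∀ s ∈ Set.Icc (0:ℝ) 1, φ s ≤ g s) ∧ y = g t} with hS
  have hval : φt t = sInf S := hφt t ⟨ht0, ht1⟩
  have hlb : ∀ y ∈ S, φ t ≤ y := by
    rintro y ⟨g, _, _, hmaj, rfl⟩
    exact hmaj t ⟨ht0, ht1⟩
  have hbdd : BddBelow S := ⟨φ t, hlb⟩
  -- nonempty: constant majorant
  have hne : S.Nonempty := by
    refine ⟨φ 1, fun _ => φ 1, ?_, ?_, ?_, rfl⟩
    · exact monotoneOn_const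
    · exact concaveOn_const _ (convex_Icc 0 1)
    · exact fun s hs => hmono hs h11 hs.2
  constructor
  · rw [hval]; exact le_csInf hne hlb
  · rw [hval]
    rcases eq_or_lt_of_le ht0 with h0 | h0
    · -- t = 0 : use the majorant g u = if u = 0 then 0 else φ 1
      subst h0
      have hg : (fun u : ℝ => if u = 0 then 0 else φ 1) 0 ∈ S := by
        refine ⟨fun u => if u = 0 then 0 else φ 1, ?_, ?_, ?_, rfl⟩
        · intro x hx y hy hxy
          by_cases hx0 : x = 0
          · simp [hx0]
            split <;> simp [hφ1]
          · have hy0 : y ≠ 0 := by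
              intro h; exact hx0 (le_antisymm (h ▸ hxy) hx.1)
            simp [hx0, hy0]
        · constructor
          · exact convex_Icc 0 1
          · intro x hx y hy a b ha hb hab
            simp only [smul_eq_mul]
            by_cases h : a * x + b * y = 0
            · rw [if_pos h]
              have hax : a * x = 0 := by nlinarith [hx.1, hy.1]
              have hby : b * y = 0 := by nlinarith [hx.1, hy.1]
              have h1 : a * (if x = 0 then (0:ℝ) else φ 1) ≤ 0 := by
                rcases mul_eq_zero.mp hax with h | h <;> simp [h]
              have h2 : b * (if y = 0 then (0:ℝ) else φ 1) ≤ 0 := by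
                rcases mul_eq_zero.mp hby with h | h <;> simp [h]
              linarith
            · rw [if_neg h]
              have h1 : (if x = 0 then (0:ℝ) else φ 1) ≤ φ 1 := by split <;> simp [hφ1]
              have h2 : (if y = 0 then (0:ℝ) else φ 1) ≤ φ 1 := by split <;> simp [hφ1]
              nlinarith
        · intro s hs
          by_cases hs0 : s = 0
          · simp [hs0, hφ0]
          · simp only [if_neg hs0]
            exact hmono hs h11 hs.2
      calc sInf S ≤ _ := csInf_le hbdd hg
        _ ≤ 2 * φ 0 := by simp [hφ0]
    · -- t > 0 : affine majorant g u = φ t + (φ t / t) * u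
      have hφtpos : 0 ≤ φ t := hnonneg t ⟨ht0, ht1⟩
      have hslope : 0 ≤ φ t / t := div_nonneg hφtpos ht0
      have hg : (fun u : ℝ => φ t + (φ t / t) * u) t ∈ S := by
        refine ⟨fun u => φ t + (φ t / t) * u, ?_, ?_, ?_, rfl⟩
        · intro x _ y _ hxy
          dsimp only
          nlinarith
        · refine ⟨convex_Icc 0 1, ?_⟩
          intro x _ y _ a b ha hb hab
          simp only [smul_eq_mul]
          nlinarith
        · intro s hs
          rcases le_or_gt s t with hst | hst
          · have := hmono hs ⟨ht0, ht1⟩ hst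
            nlinarith [mul_nonneg hslope hs.1]
          · have := hqc t s h0 hst.le hs.2
            have hspos : 0 < s := lt_of_le_of_lt ht0 hst
            have : φ s ≤ φ t / t * s := by
              rw [div_le_div_iff₀ hspos h0] at this
              rw [div_mul_eq_mul_div, le_div_iff₀ h0]
              nlinarith
            linarith
      calc sInf S ≤ _ := csInf_le hbdd hg
        _ = 2 * φ t := by field_simp; ring
end

section
/- Let {g_j}_{j=1}^∞ be nonnegative measurable functions on a measure space of total measure ≤ 1 with mutually disjoint supports, where the support of g_j is contained in B_j \ B_{j+1} for a decreasing sequence of measurable sets B_1 ⊇ B_2 ⊇ .... Then for any sequence {α_j} of reals, the nonincreasing rearrangement satisfies (∑_j α_j g_j)*(t) ≥ ∑_j |α_j| g_j*(t) χ_{(μ(B_{j+1}), μ(B_j))}(t) for a.e. t, where g_j* denotes the rearrangement of g_j. -/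
open MeasureTheory

/-- The nonincreasing rearrangement of a measurable function on `(R, μ)`. -/
noncomputable def rearr {α : Type*} [MeasurableSpace α] (μ : Measure α)
    (f : α → ℝ) (t : ℝ) : ℝ :=
  sInf {l : ℝ | 0 < l ∧ μ {x | l < |f x|} ≤ ENNReal.ofReal t}

/-- for nonnegative measurable `g_j` with disjoint supports,
`supp g_j ⊆ B_j \ B_{j+1}` for a nested decreasing sequence of measurable sets `B_j`,
and any reals `α_j`, one has a.e.
`(∑_j α_j g_j)*(t) ≥ ∑_j |α_j| g_j*(t) χ_{(μ(B_{j+1}), μ(B_j))}(t)`. -/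
theorem stmt12 {X : Type*} [MeasurableSpace X] (μ : Measure X)
    (hμ : μ Set.univ ≤ 1)
    (g : ℕ → X → ℝ) (hg : ∀ j, Measurable (g j)) (hg0 : ∀ j x, 0 ≤ g j x)
    (B : ℕ → Set X) (hB : ∀ j, MeasurableSet (B j))
    (hBnested : ∀ j, B (j + 1) ⊆ B j)
    (hsupp : ∀ j, Function.support (g j) ⊆ B j \ B (j + 1))
    (α : ℕ → ℝ) :
    ∀ᵐ t ∂(volume.restrict (Set.Ioi (0:ℝ))),
      (∑' j, |α j| * rearr μ (g j) t *
          Set.indicator (Set.Ioo ((μ (B (j + 1))).toReal) ((μ (B j)).toReal))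
            (fun _ => (1:ℝ)) t)
        ≤ rearr μ (fun x => ∑' j, α j * g j x) t := by
  set f : X → ℝ := fun x => ∑' j, α j * g j x with hfdef
  have hBanti : Antitone B := antitone_nat_of_succ_le hBnested
  have hfinuniv : μ Set.univ ≠ ⊤ := (lt_of_le_of_lt hμ (by norm_num)).ne
  have hfin : ∀ s : Set X, μ s ≠ ⊤ := fun s =>
    (lt_of_le_of_lt (le_trans (measure_mono (Set.subset_univ _)) hμ) (by norm_num)).ne
  -- disjointness of supports
  have hdisj : ∀ j x, g j x ≠ 0 → ∀ i, i ≠ j → g i x = 0 := by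
    intro j x hj i hij
    by_contra hi
    have hxj : x ∈ B j \ B (j + 1) := hsupp j hj
    have hxi : x ∈ B i \ B (i + 1) := hsupp i hi
    rcases lt_or_gt_of_ne hij with h | h
    · exact hxi.2 (hBanti (Nat.succ_le_of_lt h) hxj.1)
    · exact hxj.2 (hBanti (Nat.succ_le_of_lt h) hxi.1)
  have hfx : ∀ j x, g j x ≠ 0 → f x = α j * g j x := by
    intro j x hj
    exact tsum_eq_single j fun i hij => by rw [hdisj j x hj i hij, mul_zero]
  -- the ENNReal version of |f| is measurable
  have habs : ∀ x, ENNReal.ofReal |f x| = ∑' i, ENNReal.ofReal (|α i| * g i x) := by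
    intro x
    by_cases hx : ∃ j, g j x ≠ 0
    · obtain ⟨j, hj⟩ := hx
      rw [(tsum_eq_single j fun i hij => by
        rw [hdisj j x hj i hij, mul_zero, ENNReal.ofReal_zero] :
        ∑' i, ENNReal.ofReal (|α i| * g i x) = ENNReal.ofReal (|α j| * g j x))]
      rw [hfx j x hj, abs_mul, abs_of_nonneg (hg0 j x)]
    · push_neg at hx
      have hf0 : f x = 0 := by simp [hfdef, hx]
      simp [hf0, hx]
  have hH : Measurable fun x => ∑' i, ENNReal.ofReal (|α i| * g i x) :=
    Measurable.ennreal_tsum fun i => ((hg i).const_mul _).ennreal_ofReal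
  have hlevel : ∀ l : ℝ, 0 ≤ l → MeasurableSet {x | l < |f x|} := by
    intro l hl
    have hset : {x | l < |f x|} =
        (fun x => ∑' i, ENNReal.ofReal (|α i| * g i x)) ⁻¹' Set.Ioi (ENNReal.ofReal l) := by
      ext x
      simp only [Set.mem_setOf_eq, Set.mem_preimage, Set.mem_Ioi, ← habs x]
      exact (ENNReal.ofReal_lt_ofReal_iff_of_nonneg hl).symm
    rw [hset]
    exact hH measurableSet_Ioi
  have hre0 : ∀ (h : X → ℝ) (t : ℝ), 0 ≤ rearr μ h t := fun h t =>
    Real.sInf_nonneg fun l hl => hl.1.le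
  filter_upwards [ae_restrict_mem measurableSet_Ioi] with t ht
  have htpos : (0:ℝ) < t := ht
  -- the defining set for `rearr μ f t` is nonempty
  have hSne : ∃ l : ℝ, 0 < l ∧ μ {x | l < |f x|} ≤ ENNReal.ofReal t := by
    set s : ℕ → Set X := fun n => {x | ((n : ℝ) + 1) < |f x|} with hsdef
    have hmono : Antitone s := by
      intro m n hmn x hx
      simp only [hsdef, Set.mem_setOf_eq] at hx ⊢
      exact lt_of_le_of_lt (by exact_mod_cast add_le_add_left (Nat.cast_le.2 hmn) 1) hx
    have h0 : (⋂ n, s n) = ∅ := by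
      ext x
      simp only [Set.mem_iInter, Set.mem_empty_iff_false, iff_false, not_forall, hsdef,
        Set.mem_setOf_eq, not_lt]
      exact ⟨⌈|f x|⌉₊, (Nat.le_ceil _).trans (by linarith)⟩
    have htend := tendsto_measure_iInter_atTop
      (fun n => (hlevel _ (by positivity)).nullMeasurableSet) hmono ⟨0, hfin _⟩
    rw [h0, measure_empty] at htend
    have hT : (0 : ENNReal) < ENNReal.ofReal t := ENNReal.ofReal_pos.2 htpos
    obtain ⟨n, hn⟩ := (htend.eventually_lt_const hT).exists
    exact ⟨(n : ℝ) + 1, by positivity, hn.le⟩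
  -- the key pointwise bound
  have hkey : ∀ j, |α j| * rearr μ (g j) t ≤ rearr μ f t := by
    intro j
    rcases eq_or_ne (α j) 0 with h0 | h0
    · simpa [h0] using hre0 f t
    · have hc : 0 < |α j| := abs_pos.2 h0
      refine le_csInf (let ⟨l, hl⟩ := hSne; ⟨l, hl⟩) ?_
      rintro l ⟨hl0, hlμ⟩
      have hsub : {x | l / |α j| < |g j x|} ⊆ {x | l < |f x|} := by
        intro x hx
        have hgx : g j x ≠ 0 := by
          intro h
          rw [Set.mem_setOf_eq, h, abs_zero] at hx
          exact absurd hx (not_lt.2 (by positivity))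
        rw [Set.mem_setOf_eq, hfx j x hgx, abs_mul]
        calc l = |α j| * (l / |α j|) := by field_simp
          _ < |α j| * |g j x| := by
              exact mul_lt_mul_of_pos_left hx hc
      have hmem : l / |α j| ∈ {l : ℝ | 0 < l ∧ μ {x | l < |g j x|} ≤ ENNReal.ofReal t} :=
        ⟨div_pos hl0 hc, le_trans (measure_mono hsub) hlμ⟩
      have h2 : rearr μ (g j) t ≤ l / |α j| :=
        csInf_le ⟨0, fun m hm => hm.1.le⟩ hmem
      calc |α j| * rearr μ (g j) t ≤ |α j| * (l / |α j|) :=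
            mul_le_mul_of_nonneg_left h2 hc.le
        _ = l := by field_simp
  -- now collapse the tsum: at most one indicator is nonzero
  have htoReal : ∀ {m n : ℕ}, m ≤ n → (μ (B n)).toReal ≤ (μ (B m)).toReal :=
    fun hmn => ENNReal.toReal_mono (hfin _) (measure_mono (hBanti hmn))
  by_cases hex : ∃ j, t ∈ Set.Ioo ((μ (B (j + 1))).toReal) ((μ (B j)).toReal)
  · obtain ⟨j0, hj0⟩ := hex
    have hzero : ∀ i, i ≠ j0 → |α i| * rearr μ (g i) t *
        Set.indicator (Set.Ioo ((μ (B (i + 1))).toReal) ((μ (B i)).toReal))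
          (fun _ => (1:ℝ)) t = 0 := by
      intro i hi
      have hnot : t ∉ Set.Ioo ((μ (B (i + 1))).toReal) ((μ (B i)).toReal) := by
        rcases lt_or_gt_of_ne hi with h | h
        · intro hti
          exact absurd hti.1 (not_lt.2 (le_trans hj0.2.le (htoReal (Nat.succ_le_of_lt h))))
        · intro hti
          exact absurd hti.2 (not_lt.2 (le_trans (htoReal (Nat.succ_le_of_lt h)) hj0.1.le))
      rw [Set.indicator_of_notMem hnot, mul_zero]
    rw [tsum_eq_single j0 hzero, Set.indicator_of_mem hj0, mul_one]
    exact hkey j0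
  · push_neg at hex
    have hall : ∀ j, |α j| * rearr μ (g j) t *
        Set.indicator (Set.Ioo ((μ (B (j + 1))).toReal) ((μ (B j)).toReal))
          (fun _ => (1:ℝ)) t = 0 := fun j => by
      rw [Set.indicator_of_notMem (hex j), mul_zero]
    rw [tsum_congr hall, tsum_zero]
    exact hre0 f t
end

section
/- Let 1 ≤ m < n and let ‖·‖_{X(0,1)} be a rearrangement-invariant norm over (0,1) with |Ω| = 1. Let Y_X be the optimal rearrangement-invariant target space in the Sobolev embedding V_0^m X(Ω) ↪ Y_X(Ω), whose associate norm is given by ‖g‖_{Y_X'} = ‖ t^{m/n} g**(t) ‖_{X'(0,1)}. Then the fundamental function of Y_X' satisfies φ_{Y_X'}(a) ≤ C (a/b)^{m/n} φ_{Y_X'}(b) for all 0 < a ≤ b < 1, with C depending only on m, n, and X. -/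
open MeasureTheory
open scoped ENNReal

/-- The nonincreasing rearrangement (with respect to Lebesgue measure on `(0,1)`). -/
noncomputable def rr (f : ℝ → ℝ) (t : ℝ) : ℝ :=
  sInf {l : ℝ | 0 < l ∧ volume {x ∈ Set.Ioo (0:ℝ) 1 | l < |f x|} ≤ ENNReal.ofReal t}

/-- A rearrangement-invariant Banach function norm on `(0,1)`, satisfying (P1)–(P6). -/
structure RINorm where
  N : (ℝ → ℝ) → ℝ≥0∞
  add_le : ∀ f g : ℝ → ℝ, N (f + g) ≤ N f + N g
  smul_eq : ∀ (c : ℝ) (f : ℝ → ℝ), N (fun t => c * f t) = ENNReal.ofReal |c| * N f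
  eq_zero_iff : ∀ f : ℝ → ℝ,
    N f = 0 ↔ (∀ᵐ t ∂(volume.restrict (Set.Ioo (0:ℝ) 1)), f t = 0)
  mono : ∀ f g : ℝ → ℝ,
    (∀ᵐ t ∂(volume.restrict (Set.Ioo (0:ℝ) 1)), |f t| ≤ |g t|) → N f ≤ N g
  fatou : ∀ (f : ℕ → ℝ → ℝ) (g : ℝ → ℝ), (∀ k t, 0 ≤ f k t) →
    (∀ t, Monotone fun k => f k t) →
    (∀ t, Filter.Tendsto (fun k => f k t) Filter.atTop (nhds (g t))) →
    N g = ⨆ k, N (f k)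
  const_finite : N (fun _ => 1) < ⊤
  L1_le : ∃ C : ℝ≥0∞, C < ⊤ ∧ ∀ f : ℝ → ℝ,
    (∫⁻ t in Set.Ioo (0:ℝ) 1, ENNReal.ofReal |f t|) ≤ C * N f
  rearr_inv : ∀ f g : ℝ → ℝ, (∀ t, rr f t = rr g t) → N f = N g

/-- The associate norm `‖g‖_{X'} = sup { ∫₀¹ |f g| : ‖f‖_X ≤ 1 }`. -/
noncomputable def assocN (X : RINorm) (g : ℝ → ℝ) : ℝ≥0∞ :=
  ⨆ f : {f : ℝ → ℝ // X.N f ≤ 1},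
    ∫⁻ t in Set.Ioo (0:ℝ) 1, ENNReal.ofReal (|f.1 t| * |g t|)

/-- The maximal function `g**(t) = (1/t) ∫₀ᵗ g*(s) ds`. -/
noncomputable def maxf (g : ℝ → ℝ) (t : ℝ) : ℝ := (1 / t) * ∫ s in (0:ℝ)..t, rr g s

/-- The associate norm of the optimal Sobolev target `Y_X` (Kerman–Pick):
`‖g‖_{Y_X'} = ‖ t^{m/n} g**(t) ‖_{X'(0,1)}`, with `r = m/n`. -/
noncomputable def YXassocN (X : RINorm) (r : ℝ) (g : ℝ → ℝ) : ℝ≥0∞ :=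
  assocN X fun t => t ^ r * maxf g t

/-! ### Auxiliary lemmas -/

/-- Translation invariance of Lebesgue outer measure for arbitrary sets. -/
lemma vol_preimage_add (c : ℝ) (S : Set ℝ) :
    volume ((fun x => x + c) ⁻¹' S) = volume S := by
  have h : Measure.map (MeasurableEquiv.addRight c) volume = volume := by
    have := Measure.IsAddRightInvariant.map_add_right_eq_self (μ := (volume : Measure ℝ)) c
    simpa [MeasurableEquiv.coe_addRight] using this
  calc volume ((fun x => x + c) ⁻¹' S)
      = Measure.map (MeasurableEquiv.addRight c) volume S := by
        rw [(MeasurableEquiv.addRight c).map_apply S]; rfl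
    _ = volume S := by rw [h]

/-- Translation invariance of the lower Lebesgue integral, for arbitrary integrands. -/
lemma lintegral_translate (c : ℝ) (G : ℝ → ℝ≥0∞) :
    (∫⁻ t, G (t + c)) = ∫⁻ t, G t := by
  have h : Measure.map (MeasurableEquiv.addRight c) volume = volume := by
    have := Measure.IsAddRightInvariant.map_add_right_eq_self (μ := (volume : Measure ℝ)) c
    simpa [MeasurableEquiv.coe_addRight] using this
  have h2 := MeasureTheory.lintegral_map_equiv (μ := (volume : Measure ℝ)) G
    (MeasurableEquiv.addRight c)
  rw [h] at h2
  simp only [MeasurableEquiv.coe_addRight] at h2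
  exact h2.symm

lemma rr_indicator {a : ℝ} (ha : 0 < a) (ha1 : a < 1) (t : ℝ) :
    rr (Set.indicator (Set.Ioo (0:ℝ) a) fun _ => (1:ℝ)) t = if t < a then 1 else 0 := by
  have habs : ∀ x : ℝ, |Set.indicator (Set.Ioo (0:ℝ) a) (fun _ => (1:ℝ)) x| ≤ 1 := by
    intro x
    by_cases h : x ∈ Set.Ioo (0:ℝ) a <;> simp [Set.indicator_apply, h]
  have hvol : ∀ l : ℝ, 0 < l → l < 1 →
      {x ∈ Set.Ioo (0:ℝ) 1 | l < |Set.indicator (Set.Ioo (0:ℝ) a) (fun _ => (1:ℝ)) x|}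
        = Set.Ioo (0:ℝ) a := by
    intro l hl hl1
    ext x
    simp only [Set.mem_setOf_eq, Set.mem_Ioo]
    constructor
    · rintro ⟨hx, hlx⟩
      by_cases h : x ∈ Set.Ioo (0:ℝ) a
      · exact ⟨h.1, h.2⟩
      · rw [Set.indicator_of_notMem h] at hlx
        simp at hlx; linarith
    · rintro ⟨h0, hxa⟩
      refine ⟨⟨h0, hxa.trans ha1⟩, ?_⟩
      rw [Set.indicator_of_mem (by exact ⟨h0, hxa⟩) (fun _ => (1:ℝ))]
      simpa using hl1
  have hempty : ∀ l : ℝ, 1 ≤ l →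
      {x ∈ Set.Ioo (0:ℝ) 1 | l < |Set.indicator (Set.Ioo (0:ℝ) a) (fun _ => (1:ℝ)) x|}
        = (∅ : Set ℝ) := by
    intro l hl
    ext x
    simp only [Set.mem_setOf_eq, Set.mem_empty_iff_false, iff_false, not_and]
    intro _
    exact not_lt.mpr ((habs x).trans hl)
  unfold rr
  rcases lt_or_ge t a with h | h
  · have hset : {l : ℝ | 0 < l ∧
        volume {x ∈ Set.Ioo (0:ℝ) 1 | l < |Set.indicator (Set.Ioo (0:ℝ) a) (fun _ => (1:ℝ)) x|}
          ≤ ENNReal.ofReal t} = Set.Ici (1:ℝ) := by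
      ext l
      simp only [Set.mem_setOf_eq, Set.mem_Ici]
      constructor
      · rintro ⟨hl, hle⟩
        by_contra hl1
        push_neg at hl1
        rw [hvol l hl hl1, Real.volume_Ioo, sub_zero] at hle
        have : ENNReal.ofReal t < ENNReal.ofReal a := (ENNReal.ofReal_lt_ofReal_iff ha).mpr h
        exact absurd hle (not_le.mpr this)
      · intro hl
        refine ⟨lt_of_lt_of_le one_pos hl, ?_⟩
        rw [hempty l hl]
        simp
    rw [hset, csInf_Ici, if_pos h]
  · have hset : {l : ℝ | 0 < l ∧
        volume {x ∈ Set.Ioo (0:ℝ) 1 | l < |Set.indicator (Set.Ioo (0:ℝ) a) (fun _ => (1:ℝ)) x|}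
          ≤ ENNReal.ofReal t} = Set.Ioi (0:ℝ) := by
      ext l
      simp only [Set.mem_setOf_eq, Set.mem_Ioi]
      constructor
      · exact fun hl => hl.1
      · intro hl
        refine ⟨hl, ?_⟩
        rcases lt_or_ge l 1 with hl1 | hl1
        · rw [hvol l hl hl1, Real.volume_Ioo, sub_zero]
          exact ENNReal.ofReal_le_ofReal h
        · rw [hempty l hl1]; simp
    rw [hset, csInf_Ioi, if_neg (not_lt.mpr h)]

lemma maxf_indicator {a : ℝ} (ha : 0 < a) (ha1 : a < 1) {t : ℝ} (ht : 0 < t) :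
    maxf (Set.indicator (Set.Ioo (0:ℝ) a) fun _ => (1:ℝ)) t = (1 / t) * min t a := by
  unfold maxf
  congr 1
  have h1 : Set.EqOn (rr (Set.indicator (Set.Ioo (0:ℝ) a) fun _ => (1:ℝ)))
      ((Set.Iio a).indicator fun _ => (1:ℝ)) (Set.uIcc (0:ℝ) t) := by
    intro s _
    rw [rr_indicator ha ha1, Set.indicator_apply]
    simp [Set.mem_Iio]
  rw [intervalIntegral.integral_congr h1, intervalIntegral.integral_of_le ht.le,
    MeasureTheory.setIntegral_indicator measurableSet_Iio]
  have hm0 : 0 < min t a := lt_min ht ha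
  have hvol : volume (Set.Ioc 0 t ∩ Set.Iio a) = ENNReal.ofReal (min t a) := by
    apply le_antisymm
    · refine (measure_mono (fun x hx => ?_)).trans_eq (by rw [Real.volume_Ioc, sub_zero])
      exact Set.mem_Ioc.mpr ⟨hx.1.1, le_min hx.1.2 (le_of_lt hx.2)⟩
    · rw [← sub_zero (min t a), ← Real.volume_Ioo]
      refine measure_mono (fun x hx => ?_)
      rcases hx with ⟨hx0, hxm⟩
      exact ⟨⟨hx0, le_of_lt (lt_of_lt_of_le hxm (min_le_left _ _))⟩,
        lt_of_lt_of_le hxm (min_le_right _ _)⟩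
  rw [MeasureTheory.setIntegral_const, measureReal_def, hvol, smul_eq_mul, mul_one,
    ENNReal.toReal_ofReal hm0.le]

/-- The swap construction: exchange `(0, b/2]` and `(b/2, b]` without changing the norm. -/
lemma swap_exists (X : RINorm) (f : ℝ → ℝ) (hf : X.N f ≤ 1) {b : ℝ} (hb0 : 0 < b)
    (hb1 : b < 1) :
    ∃ f' : ℝ → ℝ, X.N f' ≤ 1 ∧
      (∫⁻ t in Set.Ioc (0:ℝ) (b/2), ENNReal.ofReal |f t|)
        = ∫⁻ t in Set.Ioc (b/2) b, ENNReal.ofReal |f' t| := by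
  set c : ℝ := b / 2 with hcdef
  have hc0 : 0 < c := by positivity
  have hcb : c < b := by simp only [hcdef]; linarith
  have hbc : b - c = c := by simp only [hcdef]; ring
  set σ : ℝ → ℝ := fun t => if t ∈ Set.Ioc (0:ℝ) c then t + c
    else if t ∈ Set.Ioc c b then t - c else t with hσdef
  have hσ1 : ∀ t ∈ Set.Ioc (0:ℝ) c, σ t = t + c := fun t ht => if_pos ht
  have hσ2 : ∀ t ∈ Set.Ioc c b, σ t = t - c := by
    intro t ht
    have h1 : t ∉ Set.Ioc (0:ℝ) c := fun h => absurd h.2 (not_le.mpr ht.1)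
    simp only [hσdef, if_neg h1, if_pos ht]
  have hσ3 : ∀ t, t ∉ Set.Ioc (0:ℝ) b → σ t = t := by
    intro t ht
    have h1 : t ∉ Set.Ioc (0:ℝ) c := fun h => ht ⟨h.1, h.2.trans hcb.le⟩
    have h2 : t ∉ Set.Ioc c b := fun h => ht ⟨hc0.trans h.1, h.2⟩
    simp only [hσdef, if_neg h1, if_neg h2]
  -- distribution functions agree
  have hvol : ∀ l : ℝ, volume {x ∈ Set.Ioo (0:ℝ) 1 | l < |(f ∘ σ) x|}
      = volume {x ∈ Set.Ioo (0:ℝ) 1 | l < |f x|} := by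
    intro l
    set A : Set ℝ := {x ∈ Set.Ioo (0:ℝ) 1 | l < |f x|} with hA
    set A' : Set ℝ := {x ∈ Set.Ioo (0:ℝ) 1 | l < |(f ∘ σ) x|} with hA'
    have split : ∀ S : Set ℝ,
        volume S = volume (S ∩ Set.Ioc (0:ℝ) c) + volume (S ∩ Set.Ioc c b)
          + volume (S \ Set.Ioc (0:ℝ) b) := by
      intro S
      have h1 : volume (S ∩ Set.Ioc (0:ℝ) b) + volume (S \ Set.Ioc (0:ℝ) b) = volume S :=
        measure_inter_add_diff S measurableSet_Ioc
      have h2 : volume (S ∩ Set.Ioc (0:ℝ) b ∩ Set.Ioc (0:ℝ) c)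
          + volume ((S ∩ Set.Ioc (0:ℝ) b) \ Set.Ioc (0:ℝ) c) = volume (S ∩ Set.Ioc (0:ℝ) b) :=
        measure_inter_add_diff _ measurableSet_Ioc
      have e1 : S ∩ Set.Ioc (0:ℝ) b ∩ Set.Ioc (0:ℝ) c = S ∩ Set.Ioc (0:ℝ) c := by
        ext x
        simp only [Set.mem_inter_iff, Set.mem_Ioc]
        constructor
        · rintro ⟨⟨hS, _⟩, h⟩; exact ⟨hS, h⟩
        · rintro ⟨hS, h0, hc⟩; exact ⟨⟨hS, h0, hc.trans hcb.le⟩, h0, hc⟩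
      have e2 : (S ∩ Set.Ioc (0:ℝ) b) \ Set.Ioc (0:ℝ) c = S ∩ Set.Ioc c b := by
        ext x
        simp only [Set.mem_diff, Set.mem_inter_iff, Set.mem_Ioc, not_and, not_le]
        constructor
        · rintro ⟨⟨hS, h0, hb⟩, h⟩; exact ⟨hS, h h0, hb⟩
        · rintro ⟨hS, hcx, hxb⟩
          exact ⟨⟨hS, hc0.trans hcx, hxb⟩, fun _ => hcx⟩
      rw [e1, e2] at h2
      rw [← h1, ← h2]
    have p1 : A' ∩ Set.Ioc (0:ℝ) c = (fun x => x + c) ⁻¹' (A ∩ Set.Ioc c b) := by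
      ext x
      simp only [Set.mem_inter_iff, Set.mem_preimage, hA', hA, Set.mem_setOf_eq,
        Set.mem_Ioc, Set.mem_Ioo]
      constructor
      · rintro ⟨⟨_, hfx⟩, h0, hxc⟩
        rw [Function.comp_apply, hσ1 x ⟨h0, hxc⟩] at hfx
        refine ⟨⟨⟨by linarith, by linarith⟩, hfx⟩, by linarith, by linarith⟩
      · rintro ⟨⟨_, hfx⟩, hcx, hxb⟩
        have hx : x ∈ Set.Ioc (0:ℝ) c := ⟨by linarith, by linarith⟩
        refine ⟨⟨⟨hx.1, by linarith⟩, ?_⟩, hx⟩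
        rw [Function.comp_apply, hσ1 x hx]; exact hfx
    have p2 : A' ∩ Set.Ioc c b = (fun x => x + -c) ⁻¹' (A ∩ Set.Ioc (0:ℝ) c) := by
      ext x
      simp only [Set.mem_inter_iff, Set.mem_preimage, hA', hA, Set.mem_setOf_eq,
        Set.mem_Ioc, Set.mem_Ioo]
      constructor
      · rintro ⟨⟨_, hfx⟩, hcx, hxb⟩
        rw [Function.comp_apply, hσ2 x ⟨hcx, hxb⟩] at hfx
        refine ⟨⟨⟨by linarith, by linarith⟩, by rw [← sub_eq_add_neg] at *; exact hfx⟩,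
          by linarith, by linarith⟩
      · rintro ⟨⟨_, hfx⟩, h0c, hxcc⟩
        have hx : x ∈ Set.Ioc c b := ⟨by linarith, by linarith⟩
        refine ⟨⟨⟨by linarith, by linarith⟩, ?_⟩, hx⟩
        rw [Function.comp_apply, hσ2 x hx, sub_eq_add_neg]; exact hfx
    have p3 : A' \ Set.Ioc (0:ℝ) b = A \ Set.Ioc (0:ℝ) b := by
      ext x
      simp only [Set.mem_diff, hA', hA, Set.mem_setOf_eq]
      constructor
      · rintro ⟨⟨hx, hfx⟩, hnb⟩
        rw [Function.comp_apply, hσ3 x hnb] at hfx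
        exact ⟨⟨hx, hfx⟩, hnb⟩
      · rintro ⟨⟨hx, hfx⟩, hnb⟩
        refine ⟨⟨hx, ?_⟩, hnb⟩
        rw [Function.comp_apply, hσ3 x hnb]; exact hfx
    rw [split A', split A, p1, p2, p3, vol_preimage_add, vol_preimage_add]
    ring
  have hrr : ∀ t, rr (f ∘ σ) t = rr f t := by
    intro t
    unfold rr
    congr 1
    ext l
    simp only [Set.mem_setOf_eq, hvol l]
  have hN : X.N (f ∘ σ) ≤ 1 := by
    rw [X.rearr_inv (f ∘ σ) f hrr]; exact hf
  refine ⟨f ∘ σ, hN, ?_⟩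
  have key : (∫⁻ t in Set.Ioc (0:ℝ) c, ENNReal.ofReal |f t|)
      = ∫⁻ t in Set.Ioc c b, ENNReal.ofReal |(f ∘ σ) t| := by
    rw [← lintegral_indicator measurableSet_Ioc, ← lintegral_indicator measurableSet_Ioc]
    rw [← lintegral_translate (-c) (fun t => (Set.Ioc (0:ℝ) c).indicator
      (fun s => ENNReal.ofReal |f s|) t)]
    congr 1
    funext t
    by_cases h : t ∈ Set.Ioc c b
    · have h' : t + -c ∈ Set.Ioc (0:ℝ) c := by
        rcases h with ⟨h1, h2⟩
        constructor <;> simp only [← sub_eq_add_neg] <;> [linarith; linarith]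
      rw [Set.indicator_of_mem h', Set.indicator_of_mem h]
      rw [Function.comp_apply, hσ2 t h, sub_eq_add_neg]
    · have h' : t + -c ∉ Set.Ioc (0:ℝ) c := by
        intro hx
        rcases hx with ⟨h1, h2⟩
        exact h ⟨by linarith [sub_eq_add_neg t c ▸ h1], by
          rw [← sub_eq_add_neg] at h2; linarith⟩
      rw [Set.indicator_of_notMem h', Set.indicator_of_notMem h]
  exact key


lemma In1 {r a t : ℝ} (hr0 : 0 < r) (hr1 : r ≤ 1) (ha : 0 < a) (ht : 0 < t) :
    t ^ r * ((1 / t) * min t a) ≤ a ^ r := by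
  rcases le_total t a with h | h
  · rw [min_eq_left h, one_div, inv_mul_cancel₀ ht.ne', mul_one]
    exact Real.rpow_le_rpow ht.le h hr0.le
  · rw [min_eq_right h]
    have ha' : 0 < a := ha
    have h1 : 1 ≤ t / a := (one_le_div ha).mpr h
    have h2 : (t / a) ^ r ≤ t / a := by
      calc (t / a) ^ r ≤ (t / a) ^ (1:ℝ) := Real.rpow_le_rpow_of_exponent_le h1 hr1
        _ = t / a := Real.rpow_one _
    have h3 : (t / a) ^ r = t ^ r / a ^ r := Real.div_rpow ht.le ha.le r
    rw [h3] at h2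
    have h4 : t ^ r * a ≤ t * a ^ r :=
      (div_le_div_iff₀ (Real.rpow_pos_of_pos ha r) ha).mp h2
    have e : t ^ r * ((1 / t) * a) = (t ^ r * a) / t := by ring
    rw [e, div_le_iff₀ ht]
    nlinarith [h4]

lemma In2 {r a b t : ℝ} (hr0 : 0 < r) (hr1 : r ≤ 1) (ha : 0 < a) (hab : a ≤ b)
    (hbt : b < t) :
    t ^ r * ((1 / t) * min t a) ≤ (a / b) ^ r * (t ^ r * ((1 / t) * min t b)) := by
  have hb0 : 0 < b := ha.trans_le hab
  have ht : 0 < t := hb0.trans hbt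
  rw [min_eq_right (le_of_lt (lt_of_le_of_lt hab hbt)), min_eq_right hbt.le]
  have h1 : a / b ≤ (a / b) ^ r := by
    calc a / b = (a / b) ^ (1:ℝ) := (Real.rpow_one _).symm
      _ ≤ (a / b) ^ r :=
        Real.rpow_le_rpow_of_exponent_ge (div_pos ha hb0) ((div_le_one hb0).mpr hab) hr1
  have key : a ≤ (a / b) ^ r * b := by
    have h2 : (a / b) * b ≤ (a / b) ^ r * b := mul_le_mul_of_nonneg_right h1 hb0.le
    have h3 : (a / b) * b = a := by field_simp
    linarith
  have hpos : (0:ℝ) ≤ t ^ r / t := by positivity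
  calc t ^ r * ((1 / t) * a) = (t ^ r / t) * a := by ring
    _ ≤ (t ^ r / t) * ((a / b) ^ r * b) := mul_le_mul_of_nonneg_left key hpos
    _ = (a / b) ^ r * (t ^ r * ((1 / t) * b)) := by ring

lemma In3 {r b t : ℝ} (hr0 : 0 ≤ r) (hb : 0 < b) (hct : b / 2 < t) (htb : t ≤ b) :
    1 ≤ (2 / b) ^ r * (t ^ r * ((1 / t) * min t b)) := by
  have ht : 0 < t := lt_trans (by positivity) hct
  rw [min_eq_left htb]
  have e : t ^ r * ((1 / t) * t) = t ^ r := by field_simp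
  rw [e, ← Real.mul_rpow (by positivity) ht.le]
  have h1 : (1:ℝ) ≤ (2 / b) * t := by
    rw [div_mul_eq_mul_div, le_div_iff₀ hb]; linarith
  calc (1:ℝ) = 1 ^ r := (Real.one_rpow r).symm
    _ ≤ ((2 / b) * t) ^ r := Real.rpow_le_rpow zero_le_one h1 hr0

lemma assocN_le_of_forall (X : RINorm) (g : ℝ → ℝ) (c : ℝ≥0∞)
    (h : ∀ f : {f : ℝ → ℝ // X.N f ≤ 1},
      (∫⁻ t in Set.Ioo (0:ℝ) 1, ENNReal.ofReal (|f.1 t| * |g t|)) ≤ c) :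
    assocN X g ≤ c :=
  iSup_le h

lemma le_assoc (X : RINorm) (g : ℝ → ℝ) (f : ℝ → ℝ) (hf : X.N f ≤ 1) (s : Set ℝ)
    (hs : MeasurableSet s) (hsub : s ⊆ Set.Ioo (0:ℝ) 1) (F : ℝ → ℝ≥0∞) (c : ℝ)
    (hc : 0 ≤ c) (hpt : ∀ t ∈ s, F t ≤ ENNReal.ofReal (c * (|f t| * |g t|))) :
    (∫⁻ t in s, F t) ≤ ENNReal.ofReal c * assocN X g := by
  calc (∫⁻ t in s, F t)
      ≤ ∫⁻ t in s, ENNReal.ofReal c * ENNReal.ofReal (|f t| * |g t|) := by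
        refine lintegral_mono_ae ?_
        filter_upwards [ae_restrict_mem hs] with t ht
        rw [← ENNReal.ofReal_mul hc]
        exact hpt t ht
    _ = ENNReal.ofReal c * ∫⁻ t in s, ENNReal.ofReal (|f t| * |g t|) :=
        lintegral_const_mul' _ _ ENNReal.ofReal_ne_top
    _ ≤ ENNReal.ofReal c * ∫⁻ t in Set.Ioo (0:ℝ) 1, ENNReal.ofReal (|f t| * |g t|) :=
        mul_le_mul_right (lintegral_mono' (Measure.restrict_mono hsub le_rfl) le_rfl) _
    _ ≤ ENNReal.ofReal c * assocN X g := by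
        refine mul_le_mul_right ?_ _
        exact le_iSup (fun p : {f : ℝ → ℝ // X.N f ≤ 1} =>
          ∫⁻ t in Set.Ioo (0:ℝ) 1, ENNReal.ofReal (|p.1 t| * |g t|)) ⟨f, hf⟩

/-- the fundamental function of `Y_X'` satisfies
`φ_{Y_X'}(a) ≤ C (a/b)^{m/n} φ_{Y_X'}(b)` for all `0 < a ≤ b < 1`. -/
theorem stmt13 (m n : ℕ) (hm : 1 ≤ m) (hmn : m < n) (X : RINorm) :
    ∃ C : ℝ, 0 < C ∧ ∀ a b : ℝ, 0 < a → a ≤ b → b < 1 →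
      YXassocN X ((m:ℝ)/n) (Set.indicator (Set.Ioo (0:ℝ) a) fun _ => (1:ℝ))
        ≤ ENNReal.ofReal (C * (a / b) ^ ((m:ℝ)/n)) *
          YXassocN X ((m:ℝ)/n) (Set.indicator (Set.Ioo (0:ℝ) b) fun _ => (1:ℝ)) := by
  refine ⟨5, by norm_num, fun a b ha hab hb1 => ?_⟩
  have hb0 : 0 < b := lt_of_lt_of_le ha hab
  have ha1 : a < 1 := lt_of_le_of_lt hab hb1
  set r : ℝ := (m:ℝ)/n with hrdef
  have hn0 : (0:ℝ) < n := by
    have : 0 < n := lt_of_le_of_lt (Nat.zero_le m) hmn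
    exact_mod_cast this
  have hm0 : (0:ℝ) < m := by exact_mod_cast Nat.lt_of_lt_of_le Nat.zero_lt_one hm
  have hr0 : 0 < r := div_pos hm0 hn0
  have hr1 : r ≤ 1 := le_of_lt ((div_lt_one hn0).mpr (by exact_mod_cast hmn))
  set indA : ℝ → ℝ := Set.indicator (Set.Ioo (0:ℝ) a) fun _ => (1:ℝ) with hindA
  set indB : ℝ → ℝ := Set.indicator (Set.Ioo (0:ℝ) b) fun _ => (1:ℝ) with hindB
  set gB : ℝ → ℝ := fun t => t ^ r * maxf indB t with hgB
  -- absolute value computations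
  have habsA : ∀ t ∈ Set.Ioo (0:ℝ) 1, |t ^ r * maxf indA t| = t ^ r * ((1/t) * min t a) := by
    intro t ht
    rw [hindA, maxf_indicator ha ha1 ht.1]
    exact abs_of_nonneg (mul_nonneg (Real.rpow_nonneg ht.1.le r)
      (mul_nonneg (one_div_nonneg.mpr ht.1.le) (le_min ht.1.le ha.le)))
  have habsB : ∀ t ∈ Set.Ioo (0:ℝ) 1, |gB t| = t ^ r * ((1/t) * min t b) := by
    intro t ht
    rw [hgB]
    simp only []
    rw [hindB, maxf_indicator hb0 hb1 ht.1]
    exact abs_of_nonneg (mul_nonneg (Real.rpow_nonneg ht.1.le r)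
      (mul_nonneg (one_div_nonneg.mpr ht.1.le) (le_min ht.1.le hb0.le)))
  have hIooB1 : Set.Ioo b 1 ⊆ Set.Ioo (0:ℝ) 1 := Set.Ioo_subset_Ioo hb0.le le_rfl
  have hIoccb : Set.Ioc (b/2) b ⊆ Set.Ioo (0:ℝ) 1 := fun x hx =>
    ⟨lt_trans (by positivity) hx.1, lt_of_le_of_lt hx.2 hb1⟩
  have main : ∀ p : {f : ℝ → ℝ // X.N f ≤ 1},
      (∫⁻ t in Set.Ioo (0:ℝ) 1, ENNReal.ofReal (|p.1 t| * |t ^ r * maxf indA t|))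
        ≤ ENNReal.ofReal (5 * (a / b) ^ r) * assocN X gB := by
    rintro ⟨f, hf⟩
    simp only []
    set φ : ℝ≥0∞ := assocN X gB with hφ
    set K : ℝ≥0∞ := ENNReal.ofReal ((2/b) ^ r) with hK
    -- split the measure at b
    have hsplit : (volume.restrict (Set.Ioo (0:ℝ) 1))
        = volume.restrict (Set.Ioc (0:ℝ) b) + volume.restrict (Set.Ioo b 1) := by
      rw [← Set.Ioc_union_Ioo_eq_Ioo hb0.le hb1,
        Measure.restrict_union (Set.disjoint_left.mpr
          (fun x hx hx' => absurd hx.2 (not_le.mpr hx'.1))) measurableSet_Ioo]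
    have hJsplit : (volume.restrict (Set.Ioc (0:ℝ) b))
        = volume.restrict (Set.Ioc (0:ℝ) (b/2)) + volume.restrict (Set.Ioc (b/2) b) := by
      rw [← Set.Ioc_union_Ioc_eq_Ioc (by positivity : (0:ℝ) ≤ b/2) (by linarith : b/2 ≤ b),
        Measure.restrict_union (Set.Ioc_disjoint_Ioc_of_le le_rfl) measurableSet_Ioc]
    -- piece over (b, 1)
    have hI2 : (∫⁻ t in Set.Ioo b 1, ENNReal.ofReal (|f t| * |t ^ r * maxf indA t|))
        ≤ ENNReal.ofReal ((a/b) ^ r) * φ := by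
      refine le_assoc X gB f hf _ measurableSet_Ioo hIooB1 _ _ (by positivity) ?_
      intro t ht
      have ht' : t ∈ Set.Ioo (0:ℝ) 1 := hIooB1 ht
      apply ENNReal.ofReal_le_ofReal
      rw [habsA t ht', habsB t ht']
      calc |f t| * (t ^ r * ((1/t) * min t a))
          ≤ |f t| * ((a/b) ^ r * (t ^ r * ((1/t) * min t b))) :=
            mul_le_mul_of_nonneg_left (In2 hr0 hr1 ha hab ht.1) (abs_nonneg _)
        _ = (a/b) ^ r * (|f t| * (t ^ r * ((1/t) * min t b))) := by ring
    -- piece over (0, b]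
    have hI1 : (∫⁻ t in Set.Ioc (0:ℝ) b, ENNReal.ofReal (|f t| * |t ^ r * maxf indA t|))
        ≤ ENNReal.ofReal (a ^ r) * ∫⁻ t in Set.Ioc (0:ℝ) b, ENNReal.ofReal |f t| := by
      rw [← lintegral_const_mul' _ _ ENNReal.ofReal_ne_top]
      refine lintegral_mono_ae ?_
      filter_upwards [ae_restrict_mem measurableSet_Ioc] with t ht
      have ht' : t ∈ Set.Ioo (0:ℝ) 1 := ⟨ht.1, lt_of_le_of_lt ht.2 hb1⟩
      rw [habsA t ht', ← ENNReal.ofReal_mul (Real.rpow_nonneg ha.le r)]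
      apply ENNReal.ofReal_le_ofReal
      calc |f t| * (t ^ r * ((1/t) * min t a)) ≤ |f t| * a ^ r :=
            mul_le_mul_of_nonneg_left (In1 hr0 hr1 ha ht.1) (abs_nonneg _)
        _ = a ^ r * |f t| := mul_comm _ _
    -- right half of (0,b]
    have hJ2 : ∀ g : ℝ → ℝ, X.N g ≤ 1 →
        (∫⁻ t in Set.Ioc (b/2) b, ENNReal.ofReal |g t|) ≤ K * φ := by
      intro g hg
      refine le_assoc X gB g hg _ measurableSet_Ioc hIoccb _ _ (by positivity) ?_
      intro t ht
      have ht' : t ∈ Set.Ioo (0:ℝ) 1 := hIoccb ht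
      apply ENNReal.ofReal_le_ofReal
      rw [habsB t ht']
      have h3 := In3 hr0.le hb0 ht.1 ht.2
      calc |g t| = |g t| * 1 := (mul_one _).symm
        _ ≤ |g t| * ((2/b) ^ r * (t ^ r * ((1/t) * min t b))) :=
            mul_le_mul_of_nonneg_left h3 (abs_nonneg _)
        _ = (2/b) ^ r * (|g t| * (t ^ r * ((1/t) * min t b))) := by ring
    -- left half of (0,b] via the swap
    obtain ⟨f', hf', heq⟩ := swap_exists X f hf hb0 hb1
    have hJ1 : (∫⁻ t in Set.Ioc (0:ℝ) (b/2), ENNReal.ofReal |f t|) ≤ K * φ := by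
      rw [heq]; exact hJ2 f' hf'
    -- assemble
    have hcoef : ENNReal.ofReal (a ^ r) * (K * φ + K * φ) + ENNReal.ofReal ((a/b) ^ r) * φ
        ≤ ENNReal.ofReal (5 * (a/b) ^ r) * φ := by
      have e1 : ENNReal.ofReal (a ^ r) * (K * φ + K * φ) + ENNReal.ofReal ((a/b) ^ r) * φ
          = (ENNReal.ofReal (a ^ r) * K + (ENNReal.ofReal (a ^ r) * K
            + ENNReal.ofReal ((a/b) ^ r))) * φ := by ring
      rw [e1]
      refine mul_le_mul_left ?_ φ
      rw [hK, ← ENNReal.ofReal_mul (Real.rpow_nonneg ha.le r),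
        ← ENNReal.ofReal_add (by positivity) (by positivity),
        ← ENNReal.ofReal_add (by positivity) (by positivity)]
      apply ENNReal.ofReal_le_ofReal
      have key2 : a ^ r * (2/b) ^ r ≤ 2 * (a/b) ^ r := by
        rw [← Real.mul_rpow ha.le (by positivity)]
        have e2 : a * (2/b) = 2 * (a/b) := by ring
        rw [e2, Real.mul_rpow (by norm_num) (by positivity)]
        have h2r : (2:ℝ) ^ r ≤ 2 := by
          calc (2:ℝ) ^ r ≤ (2:ℝ) ^ (1:ℝ) := Real.rpow_le_rpow_of_exponent_le one_le_two hr1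
            _ = 2 := Real.rpow_one 2
        exact mul_le_mul_of_nonneg_right h2r (Real.rpow_nonneg (by positivity) r)
      have hx : 0 ≤ (a/b) ^ r := Real.rpow_nonneg (by positivity) r
      linarith
    calc (∫⁻ t in Set.Ioo (0:ℝ) 1, ENNReal.ofReal (|f t| * |t ^ r * maxf indA t|))
        = (∫⁻ t in Set.Ioc (0:ℝ) b, ENNReal.ofReal (|f t| * |t ^ r * maxf indA t|))
          + ∫⁻ t in Set.Ioo b 1, ENNReal.ofReal (|f t| * |t ^ r * maxf indA t|) := by
          rw [hsplit, lintegral_add_measure]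
      _ ≤ ENNReal.ofReal (a ^ r) * (K * φ + K * φ) + ENNReal.ofReal ((a/b) ^ r) * φ := by
          refine add_le_add (hI1.trans ?_) hI2
          refine mul_le_mul_right ?_ _
          rw [hJsplit, lintegral_add_measure]
          exact add_le_add hJ1 (hJ2 f hf)
      _ ≤ ENNReal.ofReal (5 * (a/b) ^ r) * φ := hcoef
  exact iSup_le main
end

section
/- Let 1 ≤ m < n and let Z(0,1) be any rearrangement-invariant space. For every positive nonincreasing simple function f = ∑_{j=1}^M α_j χ_{(0,b_j)} with α_j > 0 and 0 < b_1 < ... < b_M ≤ 1, the equivalence ‖ ∫_t¹ f(s) s^{-1+m/n} ds ‖_{Z(0,1)} ≈ ‖ ∑_{j=1}^M α_j b_j^{m/n} χ_{(0,b_j)} ‖_{Z(0,1)} holds, with multiplicative constants depending only on m and n (in particular independent of f and Z). -/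
open MeasureTheory
open scoped ENNReal

lemma vol_Ico_inter (a c : ℝ) (ha : 0 ≤ a) (hc : c ≤ 1) :
    volume (Set.Ico a c ∩ Set.Ioo (0:ℝ) 1) = ENNReal.ofReal (c - a) := by
  apply le_antisymm
  · calc volume (Set.Ico a c ∩ Set.Ioo (0:ℝ) 1) ≤ volume (Set.Ico a c) :=
        measure_mono Set.inter_subset_left
    _ = ENNReal.ofReal (c - a) := Real.volume_Ico
  · calc ENNReal.ofReal (c - a) = volume (Set.Ioo a c) := Real.volume_Ioo.symm
    _ ≤ volume (Set.Ico a c ∩ Set.Ioo (0:ℝ) 1) := by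
        apply measure_mono
        intro x hx
        exact ⟨⟨le_of_lt hx.1, hx.2⟩, lt_of_le_of_lt ha hx.1, lt_of_lt_of_le hx.2 hc⟩

lemma vol_level (M : ℕ) (T L R : ℕ → ℝ) (u : ℝ → ℝ)
    (hT : ∀ j ∈ Finset.Icc 1 M, 0 ≤ T j)
    (hL0 : ∀ j ∈ Finset.Icc 1 M, 0 ≤ L j)
    (hR1 : ∀ j ∈ Finset.Icc 1 M, R j ≤ 1)
    (hsep : ∀ j ∈ Finset.Icc 1 M, ∀ k ∈ Finset.Icc 1 M, j < k → R j ≤ L k)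
    (hval : ∀ x ∈ Set.Ioo (0:ℝ) 1, ∀ j ∈ Finset.Icc 1 M, x ∈ Set.Ico (L j) (R j) → u x = T j)
    (hzero : ∀ x ∈ Set.Ioo (0:ℝ) 1, (∀ j ∈ Finset.Icc 1 M, x ∉ Set.Ico (L j) (R j)) → u x = 0)
    (l : ℝ) (hl : 0 < l) :
    volume {x ∈ Set.Ioo (0:ℝ) 1 | l < |u x|}
      = ∑ j ∈ (Finset.Icc 1 M).filter (fun j => l < T j), ENNReal.ofReal (R j - L j) := by
  have hset : {x ∈ Set.Ioo (0:ℝ) 1 | l < |u x|}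
      = ⋃ j ∈ (Finset.Icc 1 M).filter (fun j => l < T j),
          (Set.Ico (L j) (R j) ∩ Set.Ioo (0:ℝ) 1) := by
    ext x
    simp only [Set.mem_setOf_eq, Set.mem_iUnion, Finset.mem_filter, Set.mem_inter_iff,
      exists_prop]
    constructor
    · rintro ⟨hx01, hlx⟩
      by_cases hcase : ∃ j ∈ Finset.Icc 1 M, x ∈ Set.Ico (L j) (R j)
      · obtain ⟨j, hj, hxj⟩ := hcase
        have := hval x hx01 j hj hxj
        rw [this, abs_of_nonneg (hT j hj)] at hlx
        exact ⟨j, ⟨hj, hlx⟩, hxj, hx01⟩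
      · push_neg at hcase
        have := hzero x hx01 hcase
        rw [this] at hlx
        simp at hlx
        exact absurd hlx (not_lt.2 hl.le)
    · rintro ⟨j, ⟨hj, hlT⟩, hxj, hx01⟩
      refine ⟨hx01, ?_⟩
      rw [hval x hx01 j hj hxj, abs_of_nonneg (hT j hj)]
      exact hlT
  rw [hset, measure_biUnion_finset]
  · refine Finset.sum_congr rfl fun j hj => ?_
    have hj' := (Finset.mem_filter.1 hj).1
    exact vol_Ico_inter _ _ (hL0 j hj') (hR1 j hj')
  · intro j hj k hk hjk
    have hj' := (Finset.mem_filter.1 hj).1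
    have hk' := (Finset.mem_filter.1 hk).1
    rcases lt_or_gt_of_ne hjk with h | h
    · apply Set.disjoint_left.2
      rintro x ⟨hx1, _⟩ ⟨hx2, _⟩
      exact absurd (lt_of_lt_of_le hx1.2 (le_trans (hsep j hj' k hk' h) hx2.1)) (lt_irrefl x)
    · apply Set.disjoint_left.2
      rintro x ⟨hx1, _⟩ ⟨hx2, _⟩
      exact absurd (lt_of_lt_of_le hx2.2 (le_trans (hsep k hk' j hj' h) hx1.1)) (lt_irrefl x)
  · intro j _
    exact (measurableSet_Ico.inter measurableSet_Ioo)

lemma sum_tail (M : ℕ) (β e : ℕ → ℝ)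
    (hmono : ∀ j k, j ≤ k → k ∈ Finset.Icc 1 M → e j ≤ e k)
    (x : ℝ) (hx : 0 < x) (j : ℕ) (hj : j ∈ Finset.Icc 1 M)
    (hxl : e (j-1) ≤ x) (hxr : x < e j) :
    ∑ k ∈ Finset.Icc 1 M, β k * Set.indicator (Set.Ioo 0 (e k)) (fun _ => (1:ℝ)) x
      = ∑ k ∈ Finset.Icc j M, β k := by
  obtain ⟨hj1, hjM⟩ := Finset.mem_Icc.1 hj
  have hsub : Finset.Icc j M ⊆ Finset.Icc 1 M :=
    Finset.Icc_subset_Icc_left hj1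
  rw [← Finset.sum_subset hsub]
  · refine Finset.sum_congr rfl fun k hk => ?_
    obtain ⟨hjk, hkM⟩ := Finset.mem_Icc.1 hk
    have hxk : x < e k := lt_of_lt_of_le hxr (hmono j k hjk (Finset.mem_Icc.2 ⟨hj1.trans hjk, hkM⟩))
    rw [Set.indicator_of_mem (Set.mem_Ioo.2 ⟨hx, hxk⟩), mul_one]
  · intro k hk hk'
    obtain ⟨hk1, hkM⟩ := Finset.mem_Icc.1 hk
    have hkj : k < j := by
      by_contra hcon
      exact hk' (Finset.mem_Icc.2 ⟨not_lt.1 hcon, hkM⟩)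
    have hkj1 : k ≤ j - 1 := Nat.le_sub_one_of_lt hkj
    have hj1M : j - 1 ∈ Finset.Icc 1 M := by
      refine Finset.mem_Icc.2 ⟨le_trans hk1 hkj1, le_trans (Nat.sub_le j 1) hjM⟩
    have : e k ≤ x := le_trans (hmono k (j-1) hkj1 hj1M) hxl
    rw [Set.indicator_of_notMem (fun hmem => absurd hmem.2 (not_lt.2 this)), mul_zero]

lemma exists_least (M : ℕ) (e : ℕ → ℝ) (x : ℝ) (hx0 : e 0 ≤ x)
    (hex : ∃ j ∈ Finset.Icc 1 M, x < e j) :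
    ∃ j ∈ Finset.Icc 1 M, e (j-1) ≤ x ∧ x < e j := by
  classical
  set s := (Finset.Icc 1 M).filter (fun j => x < e j) with hs_def
  have hs : s.Nonempty := by
    obtain ⟨j, hj, hxj⟩ := hex
    exact ⟨j, Finset.mem_filter.2 ⟨hj, hxj⟩⟩
  set j₀ := s.min' hs with hj₀
  have hj₀mem := s.min'_mem hs
  have hj₀I : j₀ ∈ Finset.Icc 1 M := (Finset.mem_filter.1 hj₀mem).1
  have hj₀x : x < e j₀ := (Finset.mem_filter.1 hj₀mem).2
  refine ⟨j₀, hj₀I, ?_, hj₀x⟩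
  obtain ⟨h1, hM⟩ := Finset.mem_Icc.1 hj₀I
  rcases eq_or_lt_of_le h1 with heq | hlt
  · rw [← heq]; simpa using hx0
  · have hmem : j₀ - 1 ∈ Finset.Icc 1 M :=
      Finset.mem_Icc.2 ⟨Nat.le_sub_one_of_lt hlt, le_trans (Nat.sub_le j₀ 1) hM⟩
    have hnot : j₀ - 1 ∉ s := by
      intro hc
      have := s.min'_le _ hc
      omega
    by_contra hcon
    exact hnot (Finset.mem_filter.2 ⟨hmem, not_le.1 hcon⟩)


lemma ind_mul_eq (c : ℝ) (α : ℝ) :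
    (fun s : ℝ => Set.indicator (Set.Ioo (0:ℝ) c) (fun _ => (1:ℝ)) s * s ^ (-1 + α))
      = Set.indicator (Set.Ioo (0:ℝ) c) (fun s => s ^ (-1 + α)) := by
  funext s
  by_cases hs : s ∈ Set.Ioo (0:ℝ) c
  · rw [Set.indicator_of_mem hs, Set.indicator_of_mem hs, one_mul]
  · rw [Set.indicator_of_notMem hs, Set.indicator_of_notMem hs, zero_mul]

lemma rpow_integrable (α : ℝ) (a b t : ℝ) (ht : 0 < t) (hta : t ≤ a) (hab : a ≤ b) :
    IntervalIntegrable (fun s : ℝ => s ^ (-1 + α)) volume a b := by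
  apply ContinuousOn.intervalIntegrable
  intro s hs
  rw [Set.uIcc_of_le hab] at hs
  exact (Real.continuousAt_rpow_const s _
    (Or.inl (ne_of_gt (lt_of_lt_of_le ht (hta.trans hs.1))))).continuousWithinAt

lemma term_integrable (α : ℝ) (c t : ℝ) (ht : 0 < t) (ht1 : t ≤ 1) :
    IntervalIntegrable
      (fun s : ℝ => Set.indicator (Set.Ioo (0:ℝ) c) (fun _ => (1:ℝ)) s * s ^ (-1 + α))
      volume t 1 := by
  rw [ind_mul_eq]
  have base := rpow_integrable α t 1 t ht le_rfl ht1
  rw [intervalIntegrable_iff_integrableOn_Ioc_of_le ht1] at base ⊢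
  exact base.indicator measurableSet_Ioo

lemma term_upper (α : ℝ) (hα : 0 < α) (c : ℝ) (hc1 : c ≤ 1) (t : ℝ)
    (ht : 0 < t) (ht1 : t ≤ 1) :
    (∫ s in t..(1:ℝ), Set.indicator (Set.Ioo (0:ℝ) c) (fun _ => (1:ℝ)) s * s ^ (-1 + α))
      ≤ (c ^ α / α) * Set.indicator (Set.Ioo (0:ℝ) c) (fun _ => (1:ℝ)) t := by
  by_cases htc : t < c
  · -- t ∈ (0, c)
    rw [Set.indicator_of_mem (Set.mem_Ioo.2 ⟨ht, htc⟩), mul_one, ind_mul_eq]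
    have hint1 : IntervalIntegrable (Set.indicator (Set.Ioo (0:ℝ) c) fun s => s ^ (-1 + α))
        volume t c := by
      have base := rpow_integrable α t c t ht le_rfl htc.le
      rw [intervalIntegrable_iff_integrableOn_Ioc_of_le htc.le] at base ⊢
      exact base.indicator measurableSet_Ioo
    have hint2 : IntervalIntegrable (Set.indicator (Set.Ioo (0:ℝ) c) fun s => s ^ (-1 + α))
        volume c 1 := by
      have base := rpow_integrable α c 1 t ht htc.le hc1
      rw [intervalIntegrable_iff_integrableOn_Ioc_of_le hc1] at base ⊢
      exact base.indicator measurableSet_Ioo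
    rw [← intervalIntegral.integral_add_adjacent_intervals hint1 hint2]
    have h2 : (∫ s in c..(1:ℝ), Set.indicator (Set.Ioo (0:ℝ) c) (fun s => s ^ (-1 + α)) s) = 0 := by
      rw [intervalIntegral.integral_congr (g := fun _ => (0:ℝ))]
      · simp
      · intro s hs
        rw [Set.uIcc_of_le hc1] at hs
        exact Set.indicator_of_notMem (fun hmem => absurd hmem.2 (not_lt.2 hs.1)) _
    have h1 : (∫ s in t..c, Set.indicator (Set.Ioo (0:ℝ) c) (fun s => s ^ (-1 + α)) s)
        = (c ^ α - t ^ α) / α := by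
      have hae : ∀ᵐ (s : ℝ), s ∈ Set.uIoc t c →
          Set.indicator (Set.Ioo (0:ℝ) c) (fun s => s ^ (-1 + α)) s = s ^ (-1 + α) := by
        have hne : ∀ᵐ (s : ℝ), s ≠ c := by
          rw [MeasureTheory.ae_iff]
          convert Real.volume_singleton (a := c) using 2
          ext s; simp
        filter_upwards [hne] with s hs hmem
        rw [Set.uIoc_of_le htc.le] at hmem
        exact Set.indicator_of_mem (Set.mem_Ioo.2 ⟨lt_trans ht hmem.1, lt_of_le_of_ne hmem.2 hs⟩) _
      rw [intervalIntegral.integral_congr_ae hae, integral_rpow (Or.inl (by linarith))]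
      norm_num
    rw [h1, h2, add_zero]
    have hnum : (0:ℝ) ≤ t ^ α := Real.rpow_nonneg ht.le α
    gcongr
    linarith
  · -- t ≥ c : integral is 0
    rw [Set.indicator_of_notMem (fun hmem => absurd hmem.2 htc)]
    rw [intervalIntegral.integral_congr (g := fun _ => (0:ℝ))]
    · simp
    · intro s hs
      rw [Set.uIcc_of_le ht1] at hs
      have : s ∉ Set.Ioo (0:ℝ) c := fun hmem => absurd hmem.2 (not_lt.2 ((not_lt.1 htc).trans hs.1))
      simp only [Set.indicator_of_notMem this, zero_mul]

lemma term_lower (α : ℝ) (hα : 0 < α) (hα1 : α ≤ 1) (c : ℝ) (hc : 0 < c) (hc1 : c ≤ 1)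
    (t : ℝ) (ht : 0 < t) (ht1 : t ≤ 1) :
    (c ^ α / 2) * Set.indicator (Set.Ioo (0:ℝ) (c/2)) (fun _ => (1:ℝ)) t
      ≤ ∫ s in t..(1:ℝ), Set.indicator (Set.Ioo (0:ℝ) c) (fun _ => (1:ℝ)) s * s ^ (-1 + α) := by
  have hnonneg : ∀ s ∈ Set.Icc t 1,
      0 ≤ Set.indicator (Set.Ioo (0:ℝ) c) (fun _ => (1:ℝ)) s * s ^ (-1 + α) := by
    intro s hs
    apply mul_nonneg (Set.indicator_nonneg (fun _ _ => zero_le_one) s)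
    exact Real.rpow_nonneg (le_trans ht.le hs.1) _
  by_cases htc : t < c / 2
  · rw [Set.indicator_of_mem (Set.mem_Ioo.2 ⟨ht, htc⟩), mul_one]
    set q : ℝ → ℝ := Set.indicator (Set.Ioo (c/2) c) (fun _ => c ^ (-1 + α)) with hq
    have hqle : ∀ s ∈ Set.Icc t 1,
        q s ≤ Set.indicator (Set.Ioo (0:ℝ) c) (fun _ => (1:ℝ)) s * s ^ (-1 + α) := by
      intro s hs
      by_cases hmem : s ∈ Set.Ioo (c/2) c
      · have hs0 : (0:ℝ) < s := lt_trans (by linarith) hmem.1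
        rw [hq, Set.indicator_of_mem hmem,
          Set.indicator_of_mem (Set.mem_Ioo.2 ⟨hs0, hmem.2⟩), one_mul]
        exact Real.rpow_le_rpow_of_nonpos hs0 hmem.2.le (by linarith)
      · rw [hq, Set.indicator_of_notMem hmem]
        exact hnonneg s hs
    have hqint : IntervalIntegrable q volume t 1 := by
      rw [intervalIntegrable_iff_integrableOn_Ioc_of_le ht1]
      exact (integrableOn_const (C := c ^ (-1 + α)) measure_Ioc_lt_top.ne).indicator measurableSet_Ioo
    have hmono := intervalIntegral.integral_mono_on ht1 hqint
      (term_integrable α c t ht ht1) hqle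
    refine le_trans ?_ hmono
    have hsub : Set.Ioo (c/2) c ⊆ Set.Ioc t 1 := by
      intro s hs
      exact ⟨lt_trans htc hs.1, le_trans hs.2.le hc1⟩
    rw [intervalIntegral.integral_of_le ht1, hq,
      MeasureTheory.integral_indicator measurableSet_Ioo,
      Measure.restrict_restrict measurableSet_Ioo, Set.inter_eq_left.2 hsub,
      MeasureTheory.setIntegral_const, Real.volume_real_Ioo, smul_eq_mul,
      max_eq_left (by linarith)]
    have hcc : c ^ (-1 + α) * c = c ^ α := by
      rw [← Real.rpow_add_one (ne_of_gt hc)]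
      norm_num
    have heq : (c - c/2) * c ^ (-1 + α) = c ^ α / 2 := by
      rw [show c - c/2 = c/2 by ring, div_mul_eq_mul_div, mul_comm c (c ^ (-1 + α)), hcc]
    rw [heq]
  · rw [Set.indicator_of_notMem (fun hmem => absurd hmem.2 htc), mul_zero]
    exact intervalIntegral.integral_nonneg ht1 hnonneg

/-- for every rearrangement-invariant `Z(0,1)` and every positive
nonincreasing simple function `f = ∑_{j=1}^M α_j χ_{(0,b_j)}`,
`‖∫_t¹ f(s) s^{-1+m/n} ds‖_Z ≈ ‖∑_{j=1}^M α_j b_j^{m/n} χ_{(0,b_j)}‖_Z`, with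
constants depending only on `m` and `n`. -/
theorem stmt16 (m n : ℕ) (hm : 1 ≤ m) (hmn : m < n) :
    ∃ c₁ c₂ : ℝ, 0 < c₁ ∧ 0 < c₂ ∧
      ∀ (Z : RINorm) (M : ℕ) (A b : ℕ → ℝ),
        (∀ j ∈ Finset.Icc 1 M, 0 < A j) →
        (∀ j ∈ Finset.Icc 1 M, 0 < b j ∧ b j ≤ 1) →
        (∀ j k, 1 ≤ j → j < k → k ≤ M → b j < b k) →
        ENNReal.ofReal c₁ *
            Z.N (fun t => ∑ j ∈ Finset.Icc 1 M, A j * b j ^ ((m:ℝ)/n) *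
              Set.indicator (Set.Ioo (0:ℝ) (b j)) (fun _ => (1:ℝ)) t)
          ≤ Z.N (fun t => ∫ s in t..(1:ℝ),
              (∑ j ∈ Finset.Icc 1 M, A j *
                Set.indicator (Set.Ioo (0:ℝ) (b j)) (fun _ => (1:ℝ)) s) *
                s ^ (-1 + (m:ℝ)/n)) ∧
        Z.N (fun t => ∫ s in t..(1:ℝ),
              (∑ j ∈ Finset.Icc 1 M, A j *
                Set.indicator (Set.Ioo (0:ℝ) (b j)) (fun _ => (1:ℝ)) s) *
                s ^ (-1 + (m:ℝ)/n))
          ≤ ENNReal.ofReal c₂ *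
            Z.N (fun t => ∑ j ∈ Finset.Icc 1 M, A j * b j ^ ((m:ℝ)/n) *
              Set.indicator (Set.Ioo (0:ℝ) (b j)) (fun _ => (1:ℝ)) t) := by
  have hn0 : 0 < n := lt_of_le_of_lt (Nat.zero_le m) hmn
  have hnR : (0:ℝ) < n := by exact_mod_cast hn0
  have hmR : (0:ℝ) < m := by exact_mod_cast hm
  have hα : (0:ℝ) < (m:ℝ)/n := div_pos hmR hnR
  have hα1 : (m:ℝ)/n ≤ 1 := by
    rw [div_le_one hnR]
    exact_mod_cast hmn.le
  refine ⟨1/4, (n:ℝ)/m, by norm_num, div_pos hnR hmR, ?_⟩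
  intro Z M A b hA hb hord
  set G : ℝ → ℝ := fun t => ∑ j ∈ Finset.Icc 1 M, A j * b j ^ ((m:ℝ)/n) *
      Set.indicator (Set.Ioo (0:ℝ) (b j)) (fun _ => (1:ℝ)) t with hGdef
  set F : ℝ → ℝ := fun t => ∫ s in t..(1:ℝ),
      (∑ j ∈ Finset.Icc 1 M, A j *
        Set.indicator (Set.Ioo (0:ℝ) (b j)) (fun _ => (1:ℝ)) s) *
        s ^ (-1 + (m:ℝ)/n) with hFdef
  set H : ℝ → ℝ := fun t => ∑ j ∈ Finset.Icc 1 M, A j * b j ^ ((m:ℝ)/n) *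
      Set.indicator (Set.Ioo (0:ℝ) (b j / 2)) (fun _ => (1:ℝ)) t with hHdef
  set c : ℕ → ℝ := fun j => if j = 0 then 0 else b j with hcdef
  have hc0 : c 0 = 0 := by simp [hcdef]
  have hcb : ∀ j ∈ Finset.Icc 1 M, c j = b j := by
    intro j hj
    have : j ≠ 0 := by have := (Finset.mem_Icc.1 hj).1; omega
    simp [hcdef, this]
  have hcnn : ∀ j, j ≤ M → 0 ≤ c j := by
    intro j hj
    by_cases hj0 : j = 0
    · rw [hj0, hc0]
    · rw [hcb j (Finset.mem_Icc.2 ⟨Nat.one_le_iff_ne_zero.2 hj0, hj⟩)]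
      exact (hb j (Finset.mem_Icc.2 ⟨Nat.one_le_iff_ne_zero.2 hj0, hj⟩)).1.le
  have hcmono : ∀ j k, j ≤ k → k ∈ Finset.Icc 1 M → c j ≤ c k := by
    intro j k hjk hk
    obtain ⟨hk1, hkM⟩ := Finset.mem_Icc.1 hk
    by_cases hj0 : j = 0
    · rw [hj0, hc0, hcb k hk]
      exact (hb k hk).1.le
    · have hj1 : 1 ≤ j := Nat.one_le_iff_ne_zero.2 hj0
      rw [hcb j (Finset.mem_Icc.2 ⟨hj1, hjk.trans hkM⟩), hcb k hk]
      rcases eq_or_lt_of_le hjk with h | h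
      · rw [h]
      · exact (hord j k hj1 h hkM).le
  set T : ℕ → ℝ := fun j => ∑ k ∈ Finset.Icc j M, A k * b k ^ ((m:ℝ)/n) with hTdef
  have hTnn : ∀ j ∈ Finset.Icc 1 M, 0 ≤ T j := by
    intro j hj
    apply Finset.sum_nonneg
    intro k hk
    obtain ⟨hjk, hkM⟩ := Finset.mem_Icc.1 hk
    have hk1 : k ∈ Finset.Icc 1 M :=
      Finset.mem_Icc.2 ⟨(Finset.mem_Icc.1 hj).1.trans hjk, hkM⟩
    exact mul_nonneg (hA k hk1).le (Real.rpow_nonneg (hb k hk1).1.le _)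
  -- value lemmas
  have hGval : ∀ x : ℝ, 0 < x → ∀ j ∈ Finset.Icc 1 M,
      c (j-1) ≤ x → x < c j → G x = T j := by
    intro x hx j hj hxl hxr
    have hmatch : G x = ∑ k ∈ Finset.Icc 1 M, (A k * b k ^ ((m:ℝ)/n)) *
        Set.indicator (Set.Ioo (0:ℝ) (c k)) (fun _ => (1:ℝ)) x := by
      rw [hGdef]
      exact Finset.sum_congr rfl fun k hk => by rw [hcb k hk]
    rw [hmatch, sum_tail M _ c hcmono x hx j hj hxl hxr]
  have hHval : ∀ x : ℝ, 0 < x → ∀ j ∈ Finset.Icc 1 M,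
      c (j-1) / 2 ≤ x → x < c j / 2 → H x = T j := by
    intro x hx j hj hxl hxr
    have hmatch : H x = ∑ k ∈ Finset.Icc 1 M, (A k * b k ^ ((m:ℝ)/n)) *
        Set.indicator (Set.Ioo (0:ℝ) (c k / 2)) (fun _ => (1:ℝ)) x := by
      rw [hHdef]
      exact Finset.sum_congr rfl fun k hk => by rw [hcb k hk]
    rw [hmatch, sum_tail M _ (fun k => c k / 2)
      (fun j k hjk hk => by linarith [hcmono j k hjk hk]) x hx j hj hxl hxr]
  -- the splitting set
  set E : Set ℝ := ⋃ j ∈ Finset.Icc 1 M, Set.Ico (c (j-1)) ((c (j-1) + c j)/2) with hEdef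
  have hmid_le : ∀ j ∈ Finset.Icc 1 M, (c (j-1) + c j)/2 ≤ c j := by
    intro j hj
    have := hcmono (j-1) j (Nat.sub_le j 1) hj
    linarith
  have hle_mid : ∀ j ∈ Finset.Icc 1 M, c (j-1) ≤ (c (j-1) + c j)/2 := by
    intro j hj
    have := hcmono (j-1) j (Nat.sub_le j 1) hj
    linarith
  have hcjM : ∀ j ∈ Finset.Icc 1 M, c j ≤ 1 := by
    intro j hj
    rw [hcb j hj]; exact (hb j hj).2
  have hcj1nn : ∀ j ∈ Finset.Icc 1 M, 0 ≤ c (j-1) := by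
    intro j hj
    exact hcnn _ (le_trans (Nat.sub_le j 1) (Finset.mem_Icc.1 hj).2)
  have hsep0 : ∀ j ∈ Finset.Icc 1 M, ∀ k ∈ Finset.Icc 1 M, j < k → c j ≤ c (k-1) := by
    intro j hj k hk hjk
    obtain ⟨hk1, hkM⟩ := Finset.mem_Icc.1 hk
    have hk2 : 2 ≤ k := by
      have := (Finset.mem_Icc.1 hj).1; omega
    exact hcmono j (k-1) (by omega) (Finset.mem_Icc.2 ⟨by omega, by omega⟩)
  -- volume computations
  have hvolH : ∀ l : ℝ, 0 < l → volume {x ∈ Set.Ioo (0:ℝ) 1 | l < |H x|}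
      = ∑ j ∈ (Finset.Icc 1 M).filter (fun j => l < T j),
          ENNReal.ofReal (c j / 2 - c (j-1) / 2) := by
    intro l hl
    apply vol_level M T (fun j => c (j-1) / 2) (fun j => c j / 2) H hTnn
    · intro j hj; linarith [hcj1nn j hj]
    · intro j hj; linarith [hcjM j hj]
    · intro j hj k hk hjk; linarith [hsep0 j hj k hk hjk]
    · intro x hx j hj hxj
      exact hHval x hx.1 j hj hxj.1 hxj.2
    · intro x hx hnone
      by_cases hex : ∃ j ∈ Finset.Icc 1 M, x < c j / 2
      · obtain ⟨j, hj, hxl, hxr⟩ := exists_least M (fun k => c k / 2) x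
          (by show c 0 / 2 ≤ x; rw [hc0]; linarith [hx.1.le]) hex
        exact absurd (Set.mem_Ico.2 ⟨hxl, hxr⟩) (hnone j hj)
      · push_neg at hex
        rw [hHdef]
        apply Finset.sum_eq_zero
        intro k hk
        have : x ∉ Set.Ioo (0:ℝ) (b k / 2) := by
          intro hmem
          exact absurd hmem.2 (not_lt.2 (by rw [← hcb k hk] at *; exact hex k hk))
        rw [Set.indicator_of_notMem this, mul_zero]
    · exact hl
  have hvolE : ∀ l : ℝ, 0 < l → volume {x ∈ Set.Ioo (0:ℝ) 1 | l < |Set.indicator E G x|}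
      = ∑ j ∈ (Finset.Icc 1 M).filter (fun j => l < T j),
          ENNReal.ofReal ((c (j-1) + c j)/2 - c (j-1)) := by
    intro l hl
    apply vol_level M T (fun j => c (j-1)) (fun j => (c (j-1) + c j)/2) _ hTnn
    · intro j hj; exact hcj1nn j hj
    · intro j hj; linarith [hcjM j hj, hmid_le j hj]
    · intro j hj k hk hjk
      have h1 := hsep0 j hj k hk hjk
      have h2 := hmid_le j hj
      linarith
    · intro x hx j hj hxj
      have hxE : x ∈ E := by
        rw [hEdef]
        exact Set.mem_biUnion hj hxj
      rw [Set.indicator_of_mem hxE]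
      exact hGval x hx.1 j hj hxj.1 (lt_of_lt_of_le hxj.2 (hmid_le j hj))
    · intro x hx hnone
      have hxE : x ∉ E := by
        rw [hEdef]
        intro hmem
        obtain ⟨j, hj, hxj⟩ := Set.mem_iUnion₂.1 hmem
        exact hnone j hj hxj
      rw [Set.indicator_of_notMem hxE]
    · exact hl
  have hvolEc : ∀ l : ℝ, 0 < l → volume {x ∈ Set.Ioo (0:ℝ) 1 | l < |Set.indicator Eᶜ G x|}
      = ∑ j ∈ (Finset.Icc 1 M).filter (fun j => l < T j),
          ENNReal.ofReal (c j - (c (j-1) + c j)/2) := by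
    intro l hl
    apply vol_level M T (fun j => (c (j-1) + c j)/2) (fun j => c j) _ hTnn
    · intro j hj; linarith [hcj1nn j hj, hle_mid j hj]
    · intro j hj; exact hcjM j hj
    · intro j hj k hk hjk
      have h1 := hsep0 j hj k hk hjk
      have h2 := hle_mid k hk
      linarith
    · intro x hx j hj hxj
      have hxE : x ∉ E := by
        rw [hEdef]
        intro hmem
        obtain ⟨k, hk, hxk⟩ := Set.mem_iUnion₂.1 hmem
        rcases lt_trichotomy k j with hkj | hkj | hkj
        · have h1 : c k ≤ c (j-1) := hsep0 k hk j hj hkj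
          have h2 := hmid_le k hk
          have h3 := hle_mid j hj
          have := hxk.2
          have := hxj.1
          linarith
        · rw [hkj] at hxk
          exact absurd hxk.2 (not_lt.2 hxj.1)
        · have h1 : c j ≤ c (k-1) := hsep0 j hj k hk hkj
          have := hxk.1
          have := hxj.2
          linarith
      rw [Set.indicator_of_mem ((Set.mem_compl_iff E x).2 hxE)]
      exact hGval x hx.1 j hj (le_trans (hle_mid j hj) hxj.1) hxj.2
    · intro x hx hnone
      by_cases hex : ∃ j ∈ Finset.Icc 1 M, x < c j
      · obtain ⟨j, hj, hxl, hxr⟩ := exists_least M c x (by rw [hc0]; exact hx.1.le) hex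
        have hxmid : x < (c (j-1) + c j)/2 := by
          by_contra hcon
          exact hnone j hj (Set.mem_Ico.2 ⟨not_lt.1 hcon, hxr⟩)
        have hxE : x ∈ E := by
          rw [hEdef]
          exact Set.mem_biUnion hj (Set.mem_Ico.2 ⟨hxl, hxmid⟩)
        rw [Set.indicator_of_notMem (by simp only [Set.mem_compl_iff, not_not]; exact hxE)]
      · push_neg at hex
        have hG0 : G x = 0 := by
          rw [hGdef]
          apply Finset.sum_eq_zero
          intro k hk
          have : x ∉ Set.Ioo (0:ℝ) (b k) := by
            intro hmem
            exact absurd hmem.2 (not_lt.2 (by rw [← hcb k hk]; exact hex k hk))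
          rw [Set.indicator_of_notMem this, mul_zero]
        by_cases hxE : x ∈ Eᶜ
        · rw [Set.indicator_of_mem hxE, hG0]
        · rw [Set.indicator_of_notMem hxE]
    · exact hl
  -- rr equalities and norm equalities
  have hrrE : ∀ t, rr (Set.indicator E G) t = rr H t := by
    intro t
    unfold rr
    congr 1
    ext l
    simp only [Set.mem_setOf_eq]
    refine and_congr_right fun hl => ?_
    have hsum : ∑ j ∈ (Finset.Icc 1 M).filter (fun j => l < T j),
        ENNReal.ofReal ((c (j-1) + c j)/2 - c (j-1))
      = ∑ j ∈ (Finset.Icc 1 M).filter (fun j => l < T j),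
        ENNReal.ofReal (c j / 2 - c (j-1) / 2) :=
      Finset.sum_congr rfl fun j _ => by
        rw [show (c (j-1) + c j)/2 - c (j-1) = c j / 2 - c (j-1)/2 by ring]
    rw [hvolE l hl, hvolH l hl, hsum]
  have hrrEc : ∀ t, rr (Set.indicator Eᶜ G) t = rr H t := by
    intro t
    unfold rr
    congr 1
    ext l
    simp only [Set.mem_setOf_eq]
    refine and_congr_right fun hl => ?_
    have hsum : ∑ j ∈ (Finset.Icc 1 M).filter (fun j => l < T j),
        ENNReal.ofReal (c j - (c (j-1) + c j)/2)
      = ∑ j ∈ (Finset.Icc 1 M).filter (fun j => l < T j),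
        ENNReal.ofReal (c j / 2 - c (j-1) / 2) :=
      Finset.sum_congr rfl fun j _ => by
        rw [show c j - (c (j-1) + c j)/2 = c j / 2 - c (j-1)/2 by ring]
    rw [hvolEc l hl, hvolH l hl, hsum]
  have hNE : Z.N (Set.indicator E G) = Z.N H := Z.rearr_inv _ _ hrrE
  have hNEc : Z.N (Set.indicator Eᶜ G) = Z.N H := Z.rearr_inv _ _ hrrEc
  have hNG_split : Z.N G ≤ Z.N H + Z.N H := by
    have hdecomp : Set.indicator E G + Set.indicator Eᶜ G = G :=
      Set.indicator_self_add_compl E G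
    calc Z.N G = Z.N (Set.indicator E G + Set.indicator Eᶜ G) := by rw [hdecomp]
    _ ≤ Z.N (Set.indicator E G) + Z.N (Set.indicator Eᶜ G) := Z.add_le _ _
    _ = Z.N H + Z.N H := by rw [hNE, hNEc]
  -- pointwise integral bounds
  have hFsum : ∀ t : ℝ, 0 < t → t ≤ 1 → F t = ∑ j ∈ Finset.Icc 1 M,
      A j * ∫ s in t..(1:ℝ),
        Set.indicator (Set.Ioo (0:ℝ) (b j)) (fun _ => (1:ℝ)) s * s ^ (-1 + (m:ℝ)/n) := by
    intro t ht ht1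
    have hFt : F t = ∫ s in t..(1:ℝ), ∑ j ∈ Finset.Icc 1 M,
        A j * (Set.indicator (Set.Ioo (0:ℝ) (b j)) (fun _ => (1:ℝ)) s * s ^ (-1 + (m:ℝ)/n)) := by
      apply intervalIntegral.integral_congr
      intro s _
      simp only [Finset.sum_mul, mul_assoc]
    rw [hFt, intervalIntegral.integral_finset_sum (fun j _ =>
      ((term_integrable _ (b j) t ht ht1).const_mul (A j)))]
    exact Finset.sum_congr rfl fun j _ => intervalIntegral.integral_const_mul _ _
  have hGnn : ∀ t : ℝ, 0 ≤ G t := by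
    intro t
    rw [hGdef]
    apply Finset.sum_nonneg
    intro j hj
    exact mul_nonneg (mul_nonneg (hA j hj).le (Real.rpow_nonneg (hb j hj).1.le _))
      (Set.indicator_nonneg (fun _ _ => zero_le_one) t)
  have hHnn : ∀ t : ℝ, 0 ≤ H t := by
    intro t
    rw [hHdef]
    apply Finset.sum_nonneg
    intro j hj
    exact mul_nonneg (mul_nonneg (hA j hj).le (Real.rpow_nonneg (hb j hj).1.le _))
      (Set.indicator_nonneg (fun _ _ => zero_le_one) t)
  have hFnn : ∀ t ∈ Set.Ioo (0:ℝ) 1, 0 ≤ F t := by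
    intro t ht
    rw [hFdef]
    apply intervalIntegral.integral_nonneg ht.2.le
    intro s hs
    apply mul_nonneg
    · apply Finset.sum_nonneg
      intro j hj
      exact mul_nonneg (hA j hj).le (Set.indicator_nonneg (fun _ _ => zero_le_one) s)
    · exact Real.rpow_nonneg (le_trans ht.1.le hs.1) _
  have hFupper : ∀ t ∈ Set.Ioo (0:ℝ) 1, F t ≤ ((n:ℝ)/m) * G t := by
    intro t ht
    have hGt : G t = ∑ j ∈ Finset.Icc 1 M, A j * b j ^ ((m:ℝ)/n) *
        Set.indicator (Set.Ioo (0:ℝ) (b j)) (fun _ => (1:ℝ)) t := rfl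
    rw [hFsum t ht.1 ht.2.le, hGt, Finset.mul_sum]
    apply Finset.sum_le_sum
    intro j hj
    have hterm := term_upper ((m:ℝ)/n) hα (b j) (hb j hj).2 t ht.1 ht.2.le
    calc A j * ∫ s in t..(1:ℝ),
          Set.indicator (Set.Ioo (0:ℝ) (b j)) (fun _ => (1:ℝ)) s * s ^ (-1 + (m:ℝ)/n)
        ≤ A j * ((b j ^ ((m:ℝ)/n) / ((m:ℝ)/n)) *
            Set.indicator (Set.Ioo (0:ℝ) (b j)) (fun _ => (1:ℝ)) t) :=
          mul_le_mul_of_nonneg_left hterm (hA j hj).le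
    _ = (n:ℝ)/m * (A j * b j ^ ((m:ℝ)/n) *
          Set.indicator (Set.Ioo (0:ℝ) (b j)) (fun _ => (1:ℝ)) t) := by
        rw [div_div_eq_mul_div]
        ring
  have hHlower : ∀ t ∈ Set.Ioo (0:ℝ) 1, H t ≤ 2 * F t := by
    intro t ht
    have key : (1/2 : ℝ) * H t ≤ F t := by
      have hHt : H t = ∑ j ∈ Finset.Icc 1 M, A j * b j ^ ((m:ℝ)/n) *
          Set.indicator (Set.Ioo (0:ℝ) (b j / 2)) (fun _ => (1:ℝ)) t := rfl
      rw [hFsum t ht.1 ht.2.le, hHt, Finset.mul_sum]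
      apply Finset.sum_le_sum
      intro j hj
      have hterm := term_lower ((m:ℝ)/n) hα hα1 (b j) (hb j hj).1 (hb j hj).2 t ht.1 ht.2.le
      calc (1/2 : ℝ) * (A j * b j ^ ((m:ℝ)/n) *
            Set.indicator (Set.Ioo (0:ℝ) (b j / 2)) (fun _ => (1:ℝ)) t)
          = A j * ((b j ^ ((m:ℝ)/n) / 2) *
              Set.indicator (Set.Ioo (0:ℝ) (b j / 2)) (fun _ => (1:ℝ)) t) := by ring
      _ ≤ A j * ∫ s in t..(1:ℝ),
            Set.indicator (Set.Ioo (0:ℝ) (b j)) (fun _ => (1:ℝ)) s * s ^ (-1 + (m:ℝ)/n) :=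
          mul_le_mul_of_nonneg_left hterm (hA j hj).le
    linarith [key]
  -- norm inequalities
  have hNF_le : Z.N F ≤ ENNReal.ofReal ((n:ℝ)/m) * Z.N G := by
    have hae : ∀ᵐ t ∂(volume.restrict (Set.Ioo (0:ℝ) 1)), |F t| ≤ |((n:ℝ)/m) * G t| := by
      rw [ae_restrict_iff' measurableSet_Ioo]
      apply ae_of_all
      intro t ht
      rw [abs_of_nonneg (hFnn t ht),
        abs_of_nonneg (mul_nonneg (div_pos hnR hmR).le (hGnn t))]
      exact hFupper t ht
    calc Z.N F ≤ Z.N (fun t => ((n:ℝ)/m) * G t) := Z.mono _ _ hae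
    _ = ENNReal.ofReal |(n:ℝ)/m| * Z.N G := Z.smul_eq _ _
    _ = ENNReal.ofReal ((n:ℝ)/m) * Z.N G := by rw [abs_of_nonneg (div_pos hnR hmR).le]
  have hNH_le : Z.N H ≤ ENNReal.ofReal 2 * Z.N F := by
    have hae : ∀ᵐ t ∂(volume.restrict (Set.Ioo (0:ℝ) 1)), |H t| ≤ |(2:ℝ) * F t| := by
      rw [ae_restrict_iff' measurableSet_Ioo]
      apply ae_of_all
      intro t ht
      rw [abs_of_nonneg (hHnn t),
        abs_of_nonneg (mul_nonneg (by norm_num) (hFnn t ht))]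
      exact hHlower t ht
    calc Z.N H ≤ Z.N (fun t => (2:ℝ) * F t) := Z.mono _ _ hae
    _ = ENNReal.ofReal |(2:ℝ)| * Z.N F := Z.smul_eq _ _
    _ = ENNReal.ofReal 2 * Z.N F := by norm_num
  have hNG_le : Z.N G ≤ ENNReal.ofReal 4 * Z.N F := by
    calc Z.N G ≤ Z.N H + Z.N H := hNG_split
    _ ≤ ENNReal.ofReal 2 * Z.N F + ENNReal.ofReal 2 * Z.N F := add_le_add hNH_le hNH_le
    _ = ENNReal.ofReal 4 * Z.N F := by
        rw [← add_mul, ← ENNReal.ofReal_add (by norm_num) (by norm_num)]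
        norm_num
  constructor
  · calc ENNReal.ofReal (1/4) * Z.N G
        ≤ ENNReal.ofReal (1/4) * (ENNReal.ofReal 4 * Z.N F) := mul_le_mul_right hNG_le _
    _ = Z.N F := by
        rw [← mul_assoc, ← ENNReal.ofReal_mul (by norm_num)]
        norm_num
  · exact hNF_le
end

section
/- Let q ∈ [1,∞) and let {f_j}_{j=1}^N be functions f_j = c_j χ_{(a_j/2, a_j)} on (0,1) with c_j > 0, 0 < a_{j+1} < a_j/4, c_j^q W(a_j/2) = 1 for all j, c_j^q W(a_{j+1}) < 4^{-j}, where W(t) = ∫₀ᵗ w for a weight w satisfying the Δ₂-condition W(2t) ≤ Δ₂ W(t) for t ∈ (0,1/2). Then for every {α_j}_{j=1}^N with ∑|α_j|^q = 1, one has ∫₀¹ (∑_{j=1}^N α_j f_j)*(t)^q w(t) dt ≤ C, where C depends only on q and Δ₂ (not on N, the a_j, c_j, or α_j). -/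
open MeasureTheory

/-- Running maximum of `β 1, …, β k` (with value `0` for `k = 0`). -/
noncomputable def auxM (β : ℕ → ℝ) : ℕ → ℝ
  | 0 => 0
  | k+1 => max (auxM β k) (β (k+1))

/-- for normalized spike functions `f_j = c_j χ_{(a_j/2,a_j)}` with
lacunary supports `a_{j+1} < a_j/4`, `c_j^q W(a_j/2) = 1`, `c_j^q W(a_{j+1}) < 4^{-j}`,
and `W` satisfying the Δ₂-condition with constant `Δ₂`, one has
`∫₀¹ (∑_{j=1}^N α_j f_j)*(t)^q w(t) dt ≤ C` whenever `∑_j |α_j|^q = 1`, with `C`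
depending only on `q` and `Δ₂`. -/
theorem stmt19 (q Δ₂ : ℝ) (hq : 1 ≤ q) (hΔ : 0 < Δ₂) :
    ∃ C : ℝ, ∀ (w : ℝ → ℝ), Measurable w → (∀ t, 0 ≤ w t) →
      IntegrableOn w (Set.Ioo (0:ℝ) 1) →
      ∀ W : ℝ → ℝ, (∀ t, W t = ∫ s in (0:ℝ)..t, w s) →
      (∀ t ∈ Set.Ioc (0:ℝ) 1, 0 < W t) →
      (∀ t ∈ Set.Ioo (0:ℝ) (1/2 : ℝ), W (2 * t) ≤ Δ₂ * W t) →
      ∀ (N : ℕ) (a c : ℕ → ℝ),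
        a 1 ≤ 1 →
        (∀ j ∈ Finset.Icc 1 N, 0 < c j) →
        (∀ j ∈ Finset.Icc 1 N, 0 < a (j + 1) ∧ a (j + 1) < a j / 4) →
        (∀ j ∈ Finset.Icc 1 N, c j ^ q * W (a j / 2) = 1) →
        (∀ j ∈ Finset.Icc 1 N, c j ^ q * W (a (j + 1)) < ((1:ℝ)/4) ^ j) →
        ∀ α : ℕ → ℝ, (∑ j ∈ Finset.Icc 1 N, |α j| ^ q) = 1 →
          (∫ t in Set.Ioo (0:ℝ) 1,
            (rr (fun x => ∑ j ∈ Finset.Icc 1 N,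
                α j * c j * Set.indicator (Set.Ioo (a j / 2) (a j)) (fun _ => (1:ℝ)) x) t) ^ q
              * w t) ≤ C := by
  refine ⟨Δ₂, ?_⟩
  intro w hw_meas hw_nonneg hw_int W hW hWpos hWΔ N a c ha1 hc hgap hnorm hsmall α hα
  have hq0 : (0:ℝ) < q := lt_of_lt_of_le one_pos hq
  have hqne : q ≠ 0 := ne_of_gt hq0
  -- positivity and monotonicity of the a's
  have ha_pos : ∀ k ∈ Finset.Icc 1 N, 0 < a k := by
    intro k hk
    obtain ⟨h1, h2⟩ := hgap k hk
    linarith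
  have ha_mono : ∀ m k, 1 ≤ m → m ≤ k → k ≤ N → a k ≤ a m := by
    intro m k hm hmk
    induction k, hmk using Nat.le_induction with
    | base => intro _; exact le_rfl
    | succ k hmk ih =>
      intro hkN
      have hk1 : k ∈ Finset.Icc 1 N := Finset.mem_Icc.mpr ⟨by omega, by omega⟩
      have h1 := (hgap k hk1).2
      have h2 := ha_pos k hk1
      have h3 := ih (by omega)
      linarith
  have ha_le_one : ∀ k ∈ Finset.Icc 1 N, a k ≤ 1 := by
    intro k hk
    obtain ⟨hk1, hkN⟩ := Finset.mem_Icc.mp hk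
    exact le_trans (ha_mono 1 k le_rfl hk1 hkN) ha1
  -- geometric tail bound
  have SB : ∀ i m, 1 ≤ m → m ≤ N → N = m + i → (∑ j ∈ Finset.Icc m N, a j) ≤ 4/3 * a m := by
    intro i
    induction i with
    | zero =>
      intro m hm hmN hN
      have : m = N := by omega
      subst this
      rw [Finset.Icc_self, Finset.sum_singleton]
      have := ha_pos m (Finset.mem_Icc.mpr ⟨hm, hmN⟩)
      linarith
    | succ i ih =>
      intro m hm hmN hN
      have hmem : m ∈ Finset.Icc 1 N := Finset.mem_Icc.mpr ⟨hm, hmN⟩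
      have hins : Finset.Icc m N = insert m (Finset.Icc (m+1) N) := by
        ext x; simp [Finset.mem_Icc, Finset.mem_insert]; omega
      have hnotmem : m ∉ Finset.Icc (m+1) N := by simp
      rw [hins, Finset.sum_insert hnotmem]
      have h1 := ih (m+1) (by omega) (by omega) (by omega)
      have h2 := (hgap m hmem).2
      linarith
  have SB2 : ∀ m, 1 ≤ m → m ≤ N → (∑ j ∈ Finset.Icc m N, a j / 2) ≤ 2/3 * a m := by
    intro m h1 h2
    have := SB (N - m) m h1 h2 (by omega)
    rw [← Finset.sum_div]
    linarith
  -- abbreviations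
  set F : ℝ → ℝ := fun x => ∑ j ∈ Finset.Icc 1 N,
      α j * c j * Set.indicator (Set.Ioo (a j / 2) (a j)) (fun _ => (1:ℝ)) x with hFdef
  have hFval : ∀ x : ℝ, ∀ j0 ∈ Finset.Icc 1 N, x ∈ Set.Ioo (a j0 / 2) (a j0) →
      F x = α j0 * c j0 := by
    intro x j0 hj0 hx
    obtain ⟨hj01, hj0N⟩ := Finset.mem_Icc.mp hj0
    obtain ⟨hx1, hx2⟩ := hx
    simp only [hFdef]
    rw [Finset.sum_eq_single_of_mem j0 hj0]
    · rw [Set.indicator_of_mem (Set.mem_Ioo.mpr ⟨hx1, hx2⟩), mul_one]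
    · intro j hj hne
      obtain ⟨hj1, hjN⟩ := Finset.mem_Icc.mp hj
      have hnot : x ∉ Set.Ioo (a j / 2) (a j) := by
        rcases hne.lt_or_gt with hlt | hlt
        · -- j < j0 : a j0 ≤ a (j+1) < a j / 4
          have h1 : a j0 ≤ a (j+1) := ha_mono (j+1) j0 (by omega) (by omega) hj0N
          have h2 := (hgap j hj).2
          have h3 := ha_pos j hj
          intro hmem
          have := hmem.1
          linarith
        · -- j0 < j : a j ≤ a (j0+1) < a j0 / 4
          have h1 : a j ≤ a (j0+1) := ha_mono (j0+1) j (by omega) (by omega) hjN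
          have h2 := (hgap j0 hj0).2
          have h3 := ha_pos j0 hj0
          intro hmem
          have := hmem.2
          linarith
      rw [Set.indicator_of_notMem hnot, mul_zero]
  have hFzero : ∀ x : ℝ, (∀ j ∈ Finset.Icc 1 N, x ∉ Set.Ioo (a j / 2) (a j)) → F x = 0 := by
    intro x h
    simp only [hFdef]
    exact Finset.sum_eq_zero fun j hj => by rw [Set.indicator_of_notMem (h j hj), mul_zero]
  -- measure bound
  have MB : ∀ l : ℝ, 0 < l → ∀ K : ℕ, (∀ j ∈ Finset.Icc 1 N, l < |α j * c j| → K + 1 ≤ j) →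
      volume {x ∈ Set.Ioo (0:ℝ) 1 | l < |F x|}
        ≤ ENNReal.ofReal (∑ j ∈ Finset.Icc (K+1) N, a j / 2) := by
    intro l hl K hcond
    have hsub : {x ∈ Set.Ioo (0:ℝ) 1 | l < |F x|}
        ⊆ ⋃ j ∈ Finset.Icc (K+1) N, Set.Ioo (a j / 2) (a j) := by
      rintro x ⟨hx01, hx⟩
      by_cases hmem : ∃ j ∈ Finset.Icc 1 N, x ∈ Set.Ioo (a j / 2) (a j)
      · obtain ⟨j, hj, hxj⟩ := hmem
        rw [hFval x j hj hxj] at hx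
        have hjK : K + 1 ≤ j := hcond j hj hx
        exact Set.mem_iUnion₂.mpr ⟨j, Finset.mem_Icc.mpr ⟨hjK, (Finset.mem_Icc.mp hj).2⟩, hxj⟩
      · exfalso
        push_neg at hmem
        rw [hFzero x hmem, abs_zero] at hx
        linarith
    calc volume {x ∈ Set.Ioo (0:ℝ) 1 | l < |F x|}
        ≤ volume (⋃ j ∈ Finset.Icc (K+1) N, Set.Ioo (a j / 2) (a j)) := measure_mono hsub
      _ ≤ ∑ j ∈ Finset.Icc (K+1) N, volume (Set.Ioo (a j / 2) (a j)) :=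
          measure_biUnion_finset_le _ _
      _ = ∑ j ∈ Finset.Icc (K+1) N, ENNReal.ofReal (a j / 2) := by
          refine Finset.sum_congr rfl fun j hj => ?_
          rw [Real.volume_Ioo]
          congr 1
          ring
      _ = ENNReal.ofReal (∑ j ∈ Finset.Icc (K+1) N, a j / 2) := by
          rw [ENNReal.ofReal_sum_of_nonneg]
          intro j hj
          obtain ⟨hj1, hjN⟩ := Finset.mem_Icc.mp hj
          have := ha_pos j (Finset.mem_Icc.mpr ⟨by omega, hjN⟩)
          linarith
  -- nonnegativity of rr
  have RRnn : ∀ t : ℝ, 0 ≤ rr F t := by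
    intro t
    apply Real.sInf_nonneg
    rintro x ⟨hx, _⟩
    exact hx.le
  -- upper bound tool for rr
  have RRLE : ∀ t : ℝ, 0 < t → ∀ L : ℝ, 0 ≤ L →
      (∀ l : ℝ, L < l → volume {x ∈ Set.Ioo (0:ℝ) 1 | l < |F x|} ≤ ENNReal.ofReal t) →
      rr F t ≤ L := by
    intro t ht L hL hcond
    have hbdd : BddBelow {l : ℝ | 0 < l ∧
        volume {x ∈ Set.Ioo (0:ℝ) 1 | l < |F x|} ≤ ENNReal.ofReal t} :=
      ⟨0, fun x hx => hx.1.le⟩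
    have hstep : ∀ ε : ℝ, 0 < ε → rr F t ≤ L + ε := by
      intro ε hε
      apply csInf_le hbdd
      exact ⟨by linarith, hcond (L + ε) (by linarith)⟩
    by_contra hcon
    push_neg at hcon
    have := hstep ((rr F t - L) / 2) (by linarith)
    linarith
  -- β, M, d
  set β : ℕ → ℝ := fun k => |α k * c k| ^ q with hβdef
  have hβnn : ∀ k, 0 ≤ β k := fun k => Real.rpow_nonneg (abs_nonneg _) q
  set M : ℕ → ℝ := auxM β with hMdef
  have hM0 : M 0 = 0 := rfl
  have hMsucc : ∀ k, M (k+1) = max (M k) (β (k+1)) := fun k => rfl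
  have hMnn : ∀ k, 0 ≤ M k := by
    intro k
    induction k with
    | zero => exact le_of_eq hM0.symm
    | succ n ih => rw [hMsucc]; exact le_trans ih (le_max_left _ _)
  have hβleM : ∀ m k, 1 ≤ m → m ≤ k → β m ≤ M k := by
    intro m k hm hmk
    induction k with
    | zero => omega
    | succ n ih =>
      rw [hMsucc]
      rcases Nat.lt_or_ge m (n+1) with h | h
      · exact le_trans (ih (by omega)) (le_max_left _ _)
      · have : m = n + 1 := by omega
        subst this
        exact le_max_right _ _
  set d : ℕ → ℝ := fun k => M k - M (k - 1) with hddef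
  have hdnn : ∀ k, 1 ≤ k → 0 ≤ d k := by
    intro k hk
    obtain ⟨n, rfl⟩ := Nat.exists_eq_add_of_le hk
    show 0 ≤ M (1 + n) - M (1 + n - 1)
    have h1 : 1 + n = n + 1 := by omega
    rw [h1]
    simp only [Nat.add_sub_cancel]
    rw [hMsucc]
    have := le_max_left (M n) (β (n+1))
    linarith
  have hdle : ∀ k, 1 ≤ k → d k ≤ β k := by
    intro k hk
    obtain ⟨n, rfl⟩ := Nat.exists_eq_add_of_le hk
    show M (1 + n) - M (1 + n - 1) ≤ β (1 + n)
    have h1 : 1 + n = n + 1 := by omega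
    rw [h1]
    simp only [Nat.add_sub_cancel]
    rw [hMsucc]
    have h2 : max (M n) (β (n+1)) ≤ M n + β (n+1) :=
      max_le (le_add_of_nonneg_right (hβnn _)) (le_add_of_nonneg_left (hMnn _))
    linarith
  have hMtel : ∀ K : ℕ, (∑ k ∈ Finset.Icc 1 K, d k) = M K := by
    intro K
    induction K with
    | zero => simp [hM0]
    | succ n ih =>
      rw [Finset.sum_Icc_succ_top (by omega : 1 ≤ n + 1), ih]
      show M n + (M (n+1) - M (n+1-1)) = M (n+1)
      simp only [Nat.add_sub_cancel]
      ring
  -- the dominating function G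
  set G : ℝ → ℝ := fun s => ∑ k ∈ Finset.Icc 1 N,
      d k * Set.indicator (Set.Ioo (0:ℝ) (2/3 * a k)) (fun _ => (1:ℝ)) s with hGdef
  have hGnn : ∀ s : ℝ, 0 ≤ G s := by
    intro s
    apply Finset.sum_nonneg
    intro k hk
    have h1 := hdnn k (Finset.mem_Icc.mp hk).1
    have h2 : (0:ℝ) ≤ Set.indicator (Set.Ioo (0:ℝ) (2/3 * a k)) (fun _ => (1:ℝ)) s :=
      Set.indicator_nonneg (fun _ _ => zero_le_one) s
    exact mul_nonneg h1 h2
  -- pointwise key estimate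
  have key : ∀ t ∈ Set.Ioo (0:ℝ) 1, rr F t ^ q ≤ G t := by
    intro t ht
    obtain ⟨ht0, ht1⟩ := ht
    have hst : ∀ m : ℕ, 1 ≤ m → (m ≤ N → ¬ (t < 2/3 * a m)) →
        (∑ j ∈ Finset.Icc m N, a j / 2) ≤ t := by
      intro m hm hcond
      by_cases hmN : m ≤ N
      · have h1 := SB2 m hm hmN
        have h2 := not_lt.mp (hcond hmN)
        linarith
      · rw [Finset.Icc_eq_empty (by omega)]
        simp
        linarith
    set T := (Finset.Icc 1 N).filter (fun k => t < 2/3 * a k) with hT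
    by_cases hTne : T.Nonempty
    · set K := T.max' hTne with hK
      have hKT : K ∈ T := T.max'_mem hTne
      have hKmem : K ∈ Finset.Icc 1 N := (Finset.mem_filter.mp hKT).1
      obtain ⟨hK1, hKN⟩ := Finset.mem_Icc.mp hKmem
      have htK : t < 2/3 * a K := (Finset.mem_filter.mp hKT).2
      have hKmax : ∀ k ∈ Finset.Icc 1 N, t < 2/3 * a k → k ≤ K :=
        fun k hk h => T.le_max' k (Finset.mem_filter.mpr ⟨hk, h⟩)
      have hcondK : K + 1 ≤ N → ¬ (t < 2/3 * a (K+1)) := by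
        intro hKN' hlt
        have := hKmax (K+1) (Finset.mem_Icc.mpr ⟨by omega, hKN'⟩) hlt
        omega
      have hGt : G t = M K := by
        simp only [hGdef]
        have hsub : Finset.Icc 1 K ⊆ Finset.Icc 1 N := Finset.Icc_subset_Icc_right hKN
        rw [← Finset.sum_subset hsub]
        · rw [← hMtel K]
          refine Finset.sum_congr rfl fun k hk => ?_
          obtain ⟨hk1, hkK⟩ := Finset.mem_Icc.mp hk
          have hak : a K ≤ a k := ha_mono k K hk1 hkK hKN
          have hmem : t ∈ Set.Ioo (0:ℝ) (2/3 * a k) := ⟨ht0, by linarith⟩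
          rw [Set.indicator_of_mem hmem, mul_one]
        · intro k hk hk'
          obtain ⟨hk1, hkN⟩ := Finset.mem_Icc.mp hk
          have hkK : ¬ k ≤ K := fun h => hk' (Finset.mem_Icc.mpr ⟨hk1, h⟩)
          have hnot : t ∉ Set.Ioo (0:ℝ) (2/3 * a k) := by
            intro hmem
            exact hkK (hKmax k hk hmem.2)
          rw [Set.indicator_of_notMem hnot, mul_zero]
      rw [hGt]
      have hsum_t : (∑ j ∈ Finset.Icc (K+1) N, a j / 2) ≤ t := hst (K+1) (by omega) hcondK
      rcases lt_or_eq_of_le (hMnn K) with hMK | hMK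
      · -- 0 < M K
        set L := M K ^ (1/q) with hL
        have hLnn : 0 ≤ L := Real.rpow_nonneg (hMnn K) _
        have hLq : L ^ q = M K := by
          rw [hL, ← Real.rpow_mul (hMnn K), one_div_mul_cancel hqne, Real.rpow_one]
        have hrr : rr F t ≤ L := by
          apply RRLE t ht0 L hLnn
          intro l hl
          have hl0 : 0 < l := lt_of_le_of_lt hLnn hl
          refine le_trans (MB l hl0 K ?_) (ENNReal.ofReal_le_ofReal hsum_t)
          intro j hj hlj
          by_contra hcon
          have hjK : j ≤ K := by omega
          have hβj : β j ≤ M K := hβleM j K (Finset.mem_Icc.mp hj).1 hjK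
          have hgt : M K < |α j * c j| ^ q := by
            rw [← hLq]
            exact Real.rpow_lt_rpow hLnn (lt_trans hl hlj) hq0
          have : β j = |α j * c j| ^ q := rfl
          linarith [this ▸ hβj]
        calc rr F t ^ q ≤ L ^ q := Real.rpow_le_rpow (RRnn t) hrr hq0.le
          _ = M K := hLq
      · -- M K = 0
        have hrr0 : rr F t = 0 := by
          refine le_antisymm ?_ (RRnn t)
          apply RRLE t ht0 0 le_rfl
          intro l hl
          refine le_trans (MB l hl K ?_) (ENNReal.ofReal_le_ofReal hsum_t)
          intro j hj hlj
          by_contra hcon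
          have hjK : j ≤ K := by omega
          have hβj : β j ≤ M K := hβleM j K (Finset.mem_Icc.mp hj).1 hjK
          have hx : 0 < |α j * c j| := lt_trans hl hlj
          have hpos : 0 < |α j * c j| ^ q := Real.rpow_pos_of_pos hx q
          have : β j = |α j * c j| ^ q := rfl
          rw [this] at hβj
          linarith
        rw [hrr0, Real.zero_rpow hqne]
        exact hMnn K
    · -- T is empty
      have hrr0 : rr F t = 0 := by
        refine le_antisymm ?_ (RRnn t)
        apply RRLE t ht0 0 le_rfl
        intro l hl
        have hc1 : ∀ j ∈ Finset.Icc 1 N, l < |α j * c j| → 0 + 1 ≤ j :=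
          fun j hj _ => (Finset.mem_Icc.mp hj).1
        refine le_trans (MB l hl 0 hc1) (ENNReal.ofReal_le_ofReal ?_)
        exact hst 1 le_rfl (fun h1N hlt =>
          hTne ⟨1, Finset.mem_filter.mpr ⟨Finset.mem_Icc.mpr ⟨le_rfl, h1N⟩, hlt⟩⟩)
      rw [hrr0, Real.zero_rpow hqne]
      exact hGnn t
  -- integrability tools
  have hII : ∀ u v : ℝ, 0 ≤ u → u ≤ v → v ≤ 1 → IntervalIntegrable w volume u v := by
    intro u v h0 huv hv1
    rw [intervalIntegrable_iff_integrableOn_Ioo_of_le huv]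
    exact hw_int.mono_set (Set.Ioo_subset_Ioo h0 hv1)
  have hWmono : ∀ u v : ℝ, 0 ≤ u → u ≤ v → v ≤ 1 → W u ≤ W v := by
    intro u v h0 huv hv1
    rw [hW u, hW v]
    have h1 : IntervalIntegrable w volume 0 u := hII 0 u le_rfl h0 (le_trans huv hv1)
    have h2 : IntervalIntegrable w volume u v := hII u v h0 huv hv1
    have h3 := intervalIntegral.integral_add_adjacent_intervals h1 h2
    have h4 : 0 ≤ ∫ s in u..v, w s :=
      intervalIntegral.integral_nonneg huv (fun x _ => hw_nonneg x)
    linarith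
  have hWnn : ∀ u : ℝ, 0 ≤ u → u ≤ 1 → 0 ≤ W u := by
    intro u h0 h1
    have h2 := hWmono 0 u le_rfl h0 h1
    have h3 : W 0 = 0 := by rw [hW 0, intervalIntegral.integral_same]
    linarith
  -- rewrite G * w as a sum of indicators
  have hGw : (fun t => G t * w t) = fun t => ∑ k ∈ Finset.Icc 1 N,
      Set.indicator (Set.Ioo (0:ℝ) (2/3 * a k)) (fun s => d k * w s) t := by
    funext t
    simp only [hGdef]
    rw [Finset.sum_mul]
    refine Finset.sum_congr rfl fun k _ => ?_
    by_cases h : t ∈ Set.Ioo (0:ℝ) (2/3 * a k)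
    · rw [Set.indicator_of_mem h, Set.indicator_of_mem h, mul_one]
    · rw [Set.indicator_of_notMem h, Set.indicator_of_notMem h, mul_zero, zero_mul]
  have hint : ∀ k ∈ Finset.Icc 1 N, Integrable
      (Set.indicator (Set.Ioo (0:ℝ) (2/3 * a k)) (fun s => d k * w s))
      (volume.restrict (Set.Ioo (0:ℝ) 1)) := by
    intro k _
    exact (hw_int.const_mul (d k)).indicator measurableSet_Ioo
  have hGint : Integrable (fun t => G t * w t) (volume.restrict (Set.Ioo (0:ℝ) 1)) := by
    rw [hGw]
    exact integrable_finset_sum _ hint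
  -- main chain
  calc (∫ t in Set.Ioo (0:ℝ) 1, rr F t ^ q * w t)
      ≤ ∫ t in Set.Ioo (0:ℝ) 1, G t * w t := by
        apply integral_mono_of_nonneg
        · exact Filter.Eventually.of_forall fun t =>
            mul_nonneg (Real.rpow_nonneg (RRnn t) q) (hw_nonneg t)
        · exact hGint
        · exact (ae_restrict_iff' measurableSet_Ioo).mpr
            (Filter.Eventually.of_forall fun t ht =>
              mul_le_mul_of_nonneg_right (key t ht) (hw_nonneg t))
    _ = ∑ k ∈ Finset.Icc 1 N, d k * W (2/3 * a k) := by
        rw [hGw, integral_finset_sum _ hint]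
        refine Finset.sum_congr rfl fun k hk => ?_
        have hak := ha_pos k hk
        have hak1 := ha_le_one k hk
        rw [integral_indicator measurableSet_Ioo, Measure.restrict_restrict measurableSet_Ioo]
        have hin : Set.Ioo (0:ℝ) (2/3 * a k) ∩ Set.Ioo (0:ℝ) 1 = Set.Ioo (0:ℝ) (2/3 * a k) :=
          Set.inter_eq_left.mpr (Set.Ioo_subset_Ioo le_rfl (by linarith))
        rw [hin, integral_const_mul]
        congr 1
        rw [hW (2/3 * a k), intervalIntegral.integral_of_le (by linarith),
          integral_Ioc_eq_integral_Ioo]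
    _ ≤ ∑ k ∈ Finset.Icc 1 N, Δ₂ * |α k| ^ q := by
        refine Finset.sum_le_sum fun k hk => ?_
        obtain ⟨hk1, hkN⟩ := Finset.mem_Icc.mp hk
        have hak := ha_pos k hk
        have hak1 := ha_le_one k hk
        have hΔstep : W (2 * (a k / 3)) ≤ Δ₂ * W (a k / 3) :=
          hWΔ (a k / 3) ⟨by linarith, by linarith⟩
        have hmono : W (a k / 3) ≤ W (a k / 2) :=
          hWmono (a k / 3) (a k / 2) (by linarith) (by linarith) (by linarith)
        have heq : 2/3 * a k = 2 * (a k / 3) := by ring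
        have hWb : W (2/3 * a k) ≤ Δ₂ * W (a k / 2) := by
          rw [heq]
          calc W (2 * (a k / 3)) ≤ Δ₂ * W (a k / 3) := hΔstep
            _ ≤ Δ₂ * W (a k / 2) := by
                exact mul_le_mul_of_nonneg_left hmono hΔ.le
        have hWk : 0 ≤ W (a k / 2) := hWnn (a k / 2) (by linarith) (by linarith)
        have hβW : β k * W (a k / 2) = |α k| ^ q := by
          have h1 : β k = |α k| ^ q * c k ^ q := by
            show |α k * c k| ^ q = |α k| ^ q * c k ^ q
            rw [abs_mul, abs_of_pos (hc k hk)]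
            exact Real.mul_rpow (abs_nonneg _) (hc k hk).le
          rw [h1, mul_assoc, hnorm k hk, mul_one]
        have hd1 := hdnn k hk1
        have hd2 := hdle k hk1
        calc d k * W (2/3 * a k) ≤ d k * (Δ₂ * W (a k / 2)) :=
              mul_le_mul_of_nonneg_left hWb hd1
          _ ≤ β k * (Δ₂ * W (a k / 2)) :=
              mul_le_mul_of_nonneg_right hd2 (mul_nonneg hΔ.le hWk)
          _ = Δ₂ * (β k * W (a k / 2)) := by ring
          _ = Δ₂ * |α k| ^ q := by rw [hβW]
    _ = Δ₂ * ∑ k ∈ Finset.Icc 1 N, |α k| ^ q := by rw [Finset.mul_sum]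
    _ = Δ₂ := by rw [hα, mul_one]
end
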